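/- arXiv:1306.5143 — 4 statements merged into one kernel-verified Lean document; each statement's English description precedes it below -/
import Mathlib

section
/- Let k_1 < … < k_n be natural numbers, H_λ = Wr[H_{k_1}, …, H_{k_n}], and for j ∈ ℕ with j ∉ {k_1, …, k_n}, let H_{λ,j} = Wr[H_{k_1}, …, H_{k_n}, H_j]. Define U_λ(x) = x² − 2·(d²/dx²) log H_λ(x) = x² + 2·(H_λ'(x)/H_λ(x))² − 2·H_λ''(x)/H_λ(x) and ψ_{λ,j}(x) = e^{−x²/2}·H_{λ,j}(x)/H_λ(x). Then at every real x with H_λ(x) ≠ 0 one has −ψ_{λ,j}''(x) + U_λ(x)·ψ_{λ,j}(x) = (2j − 2n + 1)·ψ_{λ,j}(x). -/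
/-!
Write `G = H_λ`, `F = H_{λ,j}` and `ψ = e^{-x²/2} F / G`. A direct computation turns the
Schrödinger equation for `ψ` into the polynomial identity
`F'' G + F G'' - 2 F' G' - 2X (F' G - F G') = (2n - 2j) F G`, which is Crum's theorem for the
harmonic oscillator. It is proved by induction on `n`. For `n = 0` it is Hermite's equation.
Adding one more Hermite polynomial is a Darboux transformation: by the Desnanot–Jacobi identity
applied to the Wronskian matrix of `H_{k_1}, …, H_{k_{n+1}}, H_j`, the new Wronskians satisfy
`Wr[g, c] = v f` with `v = Wr[H_{k_1}, …, H_{k_n}]`, `g = Wr[…, H_{k_{n+1}}]`, `c = Wr[…, H_j]`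
and `f = Wr[…, H_{k_{n+1}}, H_j]`, and the identity for `f, g` follows algebraically from those
for `g, v` and `c, v` after dividing by `v`. Finally `v ≠ 0` because polynomials of distinct
degrees have a nonzero Wronskian, whose top coefficient is a Vandermonde-type determinant.
-/

open Polynomial MeasureTheory

/-- The physicists' Hermite polynomials: `H 0 = 1`, `H (n+1) = 2X * H n - (H n)'`. -/
noncomputable def pHermite (R : Type*) [CommRing R] : ℕ → Polynomial R
  | 0 => 1
  | n + 1 => 2 * X * pHermite R n - derivative (pHermite R n)

/-- The Wronskian determinant of a finite family of polynomials. -/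
noncomputable def polyWronskian {R : Type*} [CommRing R] {n : ℕ}
    (f : Fin n → Polynomial R) : Polynomial R :=
  (Matrix.of fun i j : Fin n => (⇑(derivative (R := R)))^[(i : ℕ)] (f j)).det

open Matrix Topology

section Hermite

variable (R : Type*) [CommRing R]

theorem pHermite_succ (n : ℕ) :
    pHermite R (n + 1) = 2 * X * pHermite R n - derivative (pHermite R n) := rfl

theorem derivative_pHermite_succ (n : ℕ) :
    derivative (pHermite R (n + 1)) = 2 * (n + 1) * pHermite R n := by
  induction n with
  | zero => simp [pHermite]
  | succ n ih =>
    rw [pHermite_succ R (n + 1), derivative_sub, ih, derivative_mul, derivative_mul, ih]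
    simp only [derivative_mul, derivative_ofNat, derivative_X, derivative_natCast,
      derivative_add, derivative_one, pHermite_succ]
    push_cast
    ring

theorem derivative_derivative_pHermite (n : ℕ) :
    derivative (derivative (pHermite R n)) =
      2 * X * derivative (pHermite R n) - 2 * (n : R[X]) * pHermite R n := by
  cases n with
  | zero => simp [pHermite]
  | succ n =>
    rw [derivative_pHermite_succ, derivative_mul, pHermite_succ]
    simp only [derivative_mul, derivative_ofNat, derivative_natCast, derivative_add,
      derivative_one]
    push_cast
    ring

theorem natDegree_pHermite_le (n : ℕ) : (pHermite R n).natDegree ≤ n := by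
  induction n with
  | zero => simp [pHermite]
  | succ n ih =>
    rw [pHermite_succ]
    refine (natDegree_sub_le _ _).trans (max_le ?_ ?_)
    · refine natDegree_mul_le.trans ?_
      have : (2 * X : R[X]).natDegree ≤ 1 := natDegree_mul_le.trans (by simp [natDegree_X_le])
      omega
    · exact (natDegree_derivative_le _).trans (by omega)

theorem coeff_pHermite_self (n : ℕ) : (pHermite R n).coeff n = 2 ^ n := by
  induction n with
  | zero => simp [pHermite]
  | succ n ih =>
    rw [pHermite_succ, coeff_sub, mul_assoc, coeff_ofNat_mul, coeff_X_mul, ih,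
      coeff_eq_zero_of_natDegree_lt ((natDegree_derivative_le _).trans_lt
        (by have := natDegree_pHermite_le R n; omega))]
    ring

variable {R} [IsDomain R] [CharZero R]

theorem natDegree_pHermite (n : ℕ) : (pHermite R n).natDegree = n :=
  natDegree_eq_of_le_of_coeff_ne_zero (natDegree_pHermite_le R n)
    (by simp [coeff_pHermite_self])

theorem pHermite_ne_zero (n : ℕ) : pHermite R n ≠ 0 := fun h => by
  have := coeff_pHermite_self R n
  rw [h, coeff_zero] at this
  exact pow_ne_zero n two_ne_zero this.symm

end Hermite

namespace Polynomial

variable {R : Type*} [CommRing R]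

theorem coeff_prod_sum_of_natDegree_le {ι : Type*} (s : Finset ι) (f : ι → R[X]) (d : ι → ℕ)
    (h : ∀ i ∈ s, (f i).natDegree ≤ d i) :
    (∏ i ∈ s, f i).coeff (∑ i ∈ s, d i) = ∏ i ∈ s, (f i).coeff (d i) := by
  classical
  induction s using Finset.induction_on with
  | empty => simp
  | insert a s ha ih =>
    rw [Finset.prod_insert ha, Finset.sum_insert ha, Finset.prod_insert ha,
      coeff_mul_add_eq_of_natDegree_le (h a (Finset.mem_insert_self a s))
        ((natDegree_prod_le s f).trans
          (Finset.sum_le_sum fun i hi => h i (Finset.mem_insert_of_mem hi))),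
      ih fun i hi => h i (Finset.mem_insert_of_mem hi)]

theorem coeff_det_of_natDegree_le {n : Type*} [Fintype n] [DecidableEq n] (M : Matrix n n R[X])
    (d : n → ℕ) (h : ∀ i j, (M i j).natDegree ≤ d j) :
    M.det.coeff (∑ j, d j) = (of fun i j => (M i j).coeff (d j)).det := by
  simp only [det_apply, finsetSum_coeff, Units.smul_def, coeff_smul, of_apply]
  refine Finset.sum_congr rfl fun σ _ => ?_
  rw [coeff_prod_sum_of_natDegree_le _ _ _ fun i _ => h (σ i) i]

theorem natDegree_X_pow_mul_iterate_derivative_le (p : R[X]) (i : ℕ) :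
    (X ^ i * derivative^[i] p).natDegree ≤ p.natDegree := by
  rcases lt_or_ge p.natDegree i with hi | hi
  · simp [iterate_derivative_eq_zero hi]
  · refine natDegree_mul_le.trans ?_
    have := natDegree_iterate_derivative p i
    have := natDegree_X_pow_le (R := R) i
    omega

theorem coeff_X_pow_mul_iterate_derivative (p : R[X]) (i d : ℕ) :
    (X ^ i * derivative^[i] p).coeff d = d.descFactorial i • p.coeff d := by
  rw [coeff_X_pow_mul']
  split_ifs with h
  · rw [coeff_iterate_derivative, Nat.sub_add_cancel h]
  · rw [Nat.descFactorial_eq_zero_iff_lt.mpr (by omega), zero_smul]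

theorem derivative_det {n : Type*} [Fintype n] [DecidableEq n] (M : Matrix n n R[X]) :
    derivative M.det = ∑ i, (M.updateRow i fun j => derivative (M i j)).det := by
  have hdet : ∀ A : Matrix n n R[X], A.det = ∑ σ : Equiv.Perm n,
      (Equiv.Perm.sign σ : R[X]) * ∏ i, A i (σ i) := fun A => by
    rw [← det_transpose, det_apply']
    rfl
  have hrow : ∀ (i : n) (σ : Equiv.Perm n),
      ∏ k, (M.updateRow i fun j => derivative (M i j)) k (σ k) =
        (∏ k ∈ Finset.univ.erase i, M k (σ k)) * derivative (M i (σ i)) := fun i σ => by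
    rw [← Finset.prod_erase_mul _ _ (Finset.mem_univ i), updateRow_self]
    congr 1
    exact Finset.prod_congr rfl fun k hk => by rw [updateRow_ne (Finset.ne_of_mem_erase hk)]
  simp only [hdet, map_sum, derivative_intCast_mul, derivative_prod_finset, Finset.mul_sum, hrow]
  exact Finset.sum_comm

end Polynomial

section Wronskian

variable {R : Type*} [CommRing R] [IsDomain R] [CharZero R]

theorem det_descFactorial_ne_zero {n : ℕ} {d : Fin n → ℕ}
    (hd : Function.Injective d) : (of fun i j : Fin n => ((d j).descFactorial i : R)).det ≠ 0 := by
  have hvdm : (of fun i j : Fin n => ((d j).descFactorial i : R)) =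
      (of fun i j : Fin n => (descPochhammer R j).eval (d i : R))ᵀ := by
    ext i j
    simp [descPochhammer_eval_eq_descFactorial]
  rw [hvdm, det_transpose, ← det_eval_matrixOfPolynomials_eq_det_vandermonde _ _
    (fun i => descPochhammer_natDegree R i) (fun i => monic_descPochhammer R i),
    det_vandermonde_ne_zero_iff]
  exact Nat.cast_injective.comp hd

theorem polyWronskian_ne_zero {n : ℕ} {f : Fin n → R[X]}
    (hf : ∀ i, f i ≠ 0) (hdeg : Function.Injective fun i => (f i).natDegree) :
    polyWronskian f ≠ 0 := by
  -- After scaling row `i` by `X ^ i`, column `j` has degree `natDegree (f j)` with top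
  -- coefficient `descFactorial (natDegree (f j)) i * leadingCoeff (f j)`.
  have hscaled : (of fun i j : Fin n => X ^ (i : ℕ) * derivative^[i] (f j)).det =
      (∏ i : Fin n, X ^ (i : ℕ)) * polyWronskian f :=
    det_mul_column (fun i : Fin n => X ^ (i : ℕ)) (of fun i j : Fin n => derivative^[i] (f j))
  have hcoeff : (of fun i j : Fin n => X ^ (i : ℕ) * derivative^[i] (f j)).det.coeff
      (∑ j, (f j).natDegree) = (∏ j, (f j).leadingCoeff) *
        (of fun i j : Fin n => ((f j).natDegree.descFactorial i : R)).det := by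
    rw [coeff_det_of_natDegree_le (of fun i j : Fin n => X ^ (i : ℕ) * derivative^[i] (f j)) _
        fun i j => by rw [of_apply]; exact natDegree_X_pow_mul_iterate_derivative_le (f j) i,
      ← det_mul_row]
    congr 1
    ext i j
    simp only [of_apply, coeff_X_pow_mul_iterate_derivative, nsmul_eq_mul, leadingCoeff, mul_comm]
  intro hW
  rw [hscaled, hW, mul_zero, coeff_zero] at hcoeff
  exact mul_ne_zero (Finset.prod_ne_zero_iff.mpr fun j _ => leadingCoeff_ne_zero.mpr (hf j))
    (det_descFactorial_ne_zero hdeg) hcoeff.symm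

end Wronskian

namespace Matrix

variable {m R : Type*} [Fintype m] [DecidableEq m] [CommRing R]

/-- The determinant of the `m × m` block of `M` bordered by row `a` and column `b` of the
trailing `Fin 2` block. -/
def borderedDet (M : Matrix (m ⊕ Fin 2) (m ⊕ Fin 2) R) (a b : Fin 2) : R :=
  (M.submatrix (Sum.map id fun _ : Fin 1 => a) (Sum.map id fun _ : Fin 1 => b)).det

theorem borderedDet_map {S : Type*} [CommRing S] (φ : R →+* S)
    (M : Matrix (m ⊕ Fin 2) (m ⊕ Fin 2) R) (a b : Fin 2) :
    borderedDet (M.map φ) a b = φ (borderedDet M a b) := by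
  rw [borderedDet, borderedDet, RingHom.map_det]
  rfl

theorem desnanot_jacobi {K : Type*} [Field K] (M : Matrix (m ⊕ Fin 2) (m ⊕ Fin 2) K)
    (hA : IsUnit M.toBlocks₁₁.det) :
    borderedDet M 0 0 * borderedDet M 1 1 - borderedDet M 1 0 * borderedDet M 0 1 =
      M.toBlocks₁₁.det * M.det := by
  let := M.toBlocks₁₁.invertibleOfIsUnitDet hA
  -- every bordered minor, and `M` itself, factors through the Schur complement `S`
  set S := M.toBlocks₂₂ - M.toBlocks₂₁ * ⅟M.toBlocks₁₁ * M.toBlocks₁₂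
  have hbordered : ∀ a b, borderedDet M a b = M.toBlocks₁₁.det * S a b := fun a b => by
    have hblocks : M.submatrix (Sum.map id fun _ : Fin 1 => a) (Sum.map id fun _ : Fin 1 => b) =
        fromBlocks M.toBlocks₁₁ (M.toBlocks₁₂.submatrix id fun _ => b)
          (M.toBlocks₂₁.submatrix (fun _ => a) id)
          (M.toBlocks₂₂.submatrix (fun _ => a) fun _ => b) := by
      ext (i | i) (j | j) <;> rfl
    rw [borderedDet, hblocks, det_fromBlocks₁₁, det_fin_one]
    simp [S, Matrix.mul_apply]
  have hdet : M.det = M.toBlocks₁₁.det * S.det := by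
    conv_lhs => rw [← fromBlocks_toBlocks M]
    exact det_fromBlocks₁₁ _ _ _ _
  rw [hbordered, hbordered, hbordered, hbordered, hdet, det_fin_two]
  ring

end Matrix

theorem Fin.snoc_val_eq_val (p : ℕ) :
    Fin.snoc (fun i : Fin p => (i : ℕ)) p = fun i : Fin (p + 1) => (i : ℕ) := by
  ext i
  cases i using Fin.lastCases <;> simp

section WronskianJacobi

variable {R : Type*} [CommRing R]

noncomputable def derivativeMatrix {ι κ : Type*} (r : ι → ℕ) (f : κ → R[X]) : Matrix ι κ R[X] :=
  of fun i j => derivative^[r i] (f j)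

theorem polyWronskian_eq_det_derivativeMatrix {n : ℕ} (f : Fin n → R[X]) :
    polyWronskian f = (derivativeMatrix (fun i : Fin n => (i : ℕ)) f).det := rfl

theorem derivative_polyWronskian {p : ℕ} (f : Fin (p + 1) → R[X]) :
    derivative (polyWronskian f) =
      (derivativeMatrix (Fin.snoc (fun i : Fin p => (i : ℕ)) (p + 1)) f).det := by
  rw [polyWronskian, derivative_det, Finset.sum_eq_single (Fin.last p)]
  · congr 1
    ext i j
    cases i using Fin.lastCases with
    | last => simp [derivativeMatrix, Function.iterate_succ_apply']
    | cast i => simp [derivativeMatrix]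
  · intro r _ hr
    obtain ⟨r, rfl⟩ := Fin.exists_castSucc_eq.mpr hr
    -- differentiating row `r < p` reproduces row `r + 1`
    refine det_zero_of_row_eq (Fin.castSucc_lt_succ (i := r)).ne ?_
    ext j
    simp [updateRow_ne (Fin.castSucc_lt_succ (i := r)).ne', Function.iterate_succ_apply']
  · simp

theorem borderedDet_derivativeMatrix {p : ℕ} (f : Fin p → R[X]) (g h : R[X]) (a b : Fin 2) :
    borderedDet ((derivativeMatrix (fun i : Fin (p + 2) => (i : ℕ))
        (Fin.snoc (Fin.snoc f g) h)).submatrix finSumFinEquiv finSumFinEquiv) a b =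
      (derivativeMatrix (Fin.snoc (fun i : Fin p => (i : ℕ)) (p + a))
        (Fin.snoc f (![g, h] b))).det := by
  rw [← det_submatrix_equiv_self finSumFinEquiv, borderedDet]
  congr 1
  refine Matrix.ext fun i j => ?_
  rcases i with i | i <;> rcases j with j | j <;> fin_cases a <;> fin_cases b <;>
    simp [derivativeMatrix, Fin.snoc, Function.iterate_succ_apply'] <;> rfl

theorem wronskian_polyWronskian_snoc [IsDomain R] {p : ℕ} (f : Fin p → R[X]) (g h : R[X])
    (hf : polyWronskian f ≠ 0) :
    wronskian (polyWronskian (Fin.snoc f g)) (polyWronskian (Fin.snoc f h)) =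
      polyWronskian f * polyWronskian (Fin.snoc (Fin.snoc f g) h) := by
  let e : Fin p ⊕ Fin 2 ≃ Fin (p + 2) := finSumFinEquiv
  set N := (derivativeMatrix (fun i : Fin (p + 2) => (i : ℕ))
    (Fin.snoc (Fin.snoc f g) h)).submatrix e e
  have hcorner : N.toBlocks₁₁.det = polyWronskian f := by
    rw [polyWronskian_eq_det_derivativeMatrix]
    congr 1
    refine Matrix.ext fun i j => ?_
    simp [N, e, toBlocks₁₁, derivativeMatrix, Fin.snoc]
    rfl
  have hN : N.det = polyWronskian (Fin.snoc (Fin.snoc f g) h) := det_submatrix_equiv_self _ _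
  have hrow₀ : ∀ b, borderedDet N 0 b = polyWronskian (Fin.snoc f (![g, h] b)) := fun b => by
    rw [borderedDet_derivativeMatrix, polyWronskian_eq_det_derivativeMatrix, ← Fin.snoc_val_eq_val]
    rfl
  have hrow₁ : ∀ b, borderedDet N 1 b = derivative (polyWronskian (Fin.snoc f (![g, h] b))) :=
    fun b => by rw [borderedDet_derivativeMatrix, derivative_polyWronskian]; rfl
  let φ := algebraMap R[X] (FractionRing R[X])
  have hφ : Function.Injective φ := IsFractionRing.injective _ _
  have hcorner' : (N.map φ).toBlocks₁₁.det = φ (polyWronskian f) := by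
    rw [← hcorner, RingHom.map_det]
    rfl
  have hdet : (N.map φ).det = φ (polyWronskian (Fin.snoc (Fin.snoc f g) h)) := by
    rw [← hN, RingHom.map_det]
    rfl
  have key := desnanot_jacobi (N.map φ)
    (by rw [hcorner']; exact isUnit_iff_ne_zero.mpr ((map_ne_zero_iff φ hφ).mpr hf))
  simp only [borderedDet_map, hrow₀, hrow₁, hcorner', hdet] at key
  apply hφ
  simpa [wronskian] using key

end WronskianJacobi

section Darboux

variable {R : Type*} [CommRing R]

/-- For `q = F / G`, `hermiteBracket F G = G² (q'' - 2X q' + 2 (log G)'' q)`: so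
`hermiteBracket F G = λ F G` says that `e^{-x²/2} q` is an eigenfunction, with eigenvalue `1 - λ`,
of the Schrödinger operator with potential `x² - 2 (log G)''`. -/
noncomputable def hermiteBracket (F G : R[X]) : R[X] :=
  derivative (derivative F) * G + F * derivative (derivative G) -
    2 * (derivative F * derivative G) - 2 * X * (derivative F * G - F * derivative G)

theorem hermiteBracket_darboux [IsDomain R] {v g c f : R[X]} {a b : R} (hv : v ≠ 0)
    (hg : hermiteBracket g v = C a * (g * v)) (hc : hermiteBracket c v = C b * (c * v))
    (hf : wronskian g c = v * f) : hermiteBracket f g = C (b + 2) * (f * g) := by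
  have hg' := congrArg derivative hg
  have hc' := congrArg derivative hc
  have hf' := congrArg derivative hf
  have hf'' := congrArg derivative hf'
  let φ := algebraMap R[X] (FractionRing R[X])
  have hφ : Function.Injective φ := IsFractionRing.injective _ _
  have hv' : φ v ≠ 0 := (map_ne_zero_iff φ hφ).mpr hv
  simp only [hermiteBracket, wronskian, derivative_mul, derivative_sub, derivative_add,
    derivative_C, derivative_X, derivative_ofNat] at hg hc hf hg' hc' hf' hf'' ⊢
  apply hφ
  apply_fun φ at hg hc hf hg' hc' hf' hf''
  simp only [map_mul, map_sub, map_add, map_ofNat, map_zero, map_one]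
    at hg hc hf hg' hc' hf' hf'' ⊢
  -- in the fraction field each hypothesis can be solved for its highest derivative
  grind

theorem hermiteBracket_polyWronskian_pHermite [IsDomain R] [CharZero R] {n : ℕ}
    {k : Fin n → ℕ} (hk : Function.Injective k) (j : ℕ) :
    hermiteBracket (polyWronskian (Fin.snoc (fun i => pHermite R (k i)) (pHermite R j)))
        (polyWronskian fun i => pHermite R (k i)) =
      C (2 * n - 2 * j : R) *
        (polyWronskian (Fin.snoc (fun i => pHermite R (k i)) (pHermite R j)) *
          polyWronskian fun i => pHermite R (k i)) := by
  induction n generalizing j with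
  | zero =>
    have hW : polyWronskian (fun i : Fin 0 => pHermite R (k i)) = 1 := det_isEmpty
    have hW' : polyWronskian (Fin.snoc (fun i : Fin 0 => pHermite R (k i)) (pHermite R j)) =
        pHermite R j := det_fin_one _
    rw [hW, hW', hermiteBracket, derivative_derivative_pHermite]
    simp only [derivative_one, map_sub, map_mul, map_ofNat, map_natCast, Nat.cast_zero,
      mul_zero, map_zero]
    ring
  | succ n ih =>
    have hinit : Function.Injective fun i : Fin n => k i.castSucc :=
      hk.comp (Fin.castSucc_injective n)
    have hv : polyWronskian (fun i : Fin n => pHermite R (k i.castSucc)) ≠ 0 :=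
      polyWronskian_ne_zero (fun i => pHermite_ne_zero _)
        (by simpa [natDegree_pHermite] using hinit)
    have hsplit : (fun i => pHermite R (k i)) =
        Fin.snoc (fun i : Fin n => pHermite R (k i.castSucc)) (pHermite R (k (Fin.last n))) :=
      (Fin.snoc_init_self _).symm
    rw [hsplit]
    convert hermiteBracket_darboux hv (ih hinit (k (Fin.last n))) (ih hinit j)
      (wronskian_polyWronskian_snoc _ _ _ hv) using 3
    push_cast
    ring

end Darboux

theorem Polynomial.hasDerivAt_eval_div {𝕜 : Type*} [NontriviallyNormedField 𝕜] (P Q : 𝕜[X])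
    {x : 𝕜} (hx : Q.eval x ≠ 0) :
    HasDerivAt (fun t => P.eval t / Q.eval t)
      ((derivative P * Q - P * derivative Q).eval x / (Q ^ 2).eval x) x :=
  ((P.hasDerivAt x).div (Q.hasDerivAt x) hx).congr_deriv (by simp)

theorem hasDerivAt_gaussian_mul {q : ℝ → ℝ} {q' x : ℝ} (hq : HasDerivAt q q' x) :
    HasDerivAt (fun t => Real.exp (-t ^ 2 / 2) * q t)
      (Real.exp (-x ^ 2 / 2) * (q' - x * q x)) x := by
  have hquad : HasDerivAt (fun t : ℝ => -t ^ 2 / 2) (-x) x :=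
    ((hasDerivAt_pow 2 x).neg.div_const 2).congr_deriv (by push_cast; ring)
  exact (((Real.hasDerivAt_exp _).comp x hquad).mul hq).congr_deriv
    (by simp only [Function.comp_apply]; ring)

theorem schrodinger_gaussian_mul_eval_div (F G : ℝ[X]) {x : ℝ} (hx : G.eval x ≠ 0) :
    -(deriv (deriv (fun t : ℝ => Real.exp (-t ^ 2 / 2) * F.eval t / G.eval t)) x)
        + (x ^ 2 + 2 * ((derivative G).eval x / G.eval x) ^ 2
            - 2 * (derivative (derivative G)).eval x / G.eval x)
          * (Real.exp (-x ^ 2 / 2) * F.eval x / G.eval x) =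
      Real.exp (-x ^ 2 / 2) *
        (F.eval x / G.eval x - (hermiteBracket F G).eval x / G.eval x ^ 2) := by
  set P := derivative F * G - F * derivative G
  have hψ : (fun t : ℝ => Real.exp (-t ^ 2 / 2) * F.eval t / G.eval t) =
      fun t => Real.exp (-t ^ 2 / 2) * (F.eval t / G.eval t) := by
    simp only [mul_div_assoc]
  have hψ' : deriv (fun t : ℝ => Real.exp (-t ^ 2 / 2) * (F.eval t / G.eval t)) =ᶠ[𝓝 x]
      fun t => Real.exp (-t ^ 2 / 2) * (P.eval t / (G ^ 2).eval t - t * (F.eval t / G.eval t)) := by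
    filter_upwards [G.continuousAt.eventually_ne hx] with t ht
    exact (hasDerivAt_gaussian_mul (F.hasDerivAt_eval_div G ht)).deriv
  have hG2 : (G ^ 2).eval x ≠ 0 := by simpa using pow_ne_zero 2 hx
  have hq' : HasDerivAt (fun t => P.eval t / (G ^ 2).eval t - t * (F.eval t / G.eval t)) _ x :=
    (P.hasDerivAt_eval_div (G ^ 2) hG2).sub ((hasDerivAt_id' x).mul (F.hasDerivAt_eval_div G hx))
  rw [hψ, hψ'.deriv_eq, (hasDerivAt_gaussian_mul hq').deriv]
  simp only [P, hermiteBracket, eval_add, eval_sub, eval_mul, eval_pow, eval_ofNat, eval_X,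
    derivative_mul, derivative_sub, derivative_pow, eval_C]
  field_simp
  ring

theorem stmt1_general (n : ℕ) (k : Fin n → ℕ) (hk : StrictMono k)
    (j : ℕ) :
    ∀ Hlam Hlamj : Polynomial ℝ,
      Hlam = polyWronskian (fun i => pHermite ℝ (k i)) →
      Hlamj = polyWronskian (Fin.snoc (fun i => pHermite ℝ (k i)) (pHermite ℝ j)) →
      ∀ x : ℝ, Hlam.eval x ≠ 0 →
        -(deriv (deriv (fun t : ℝ =>
              Real.exp (-t ^ 2 / 2) * Hlamj.eval t / Hlam.eval t)) x)
          + (x ^ 2 + 2 * ((derivative Hlam).eval x / Hlam.eval x) ^ 2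
              - 2 * (derivative (derivative Hlam)).eval x / Hlam.eval x)
            * (Real.exp (-x ^ 2 / 2) * Hlamj.eval x / Hlam.eval x)
        = (2 * (j : ℝ) - 2 * (n : ℝ) + 1)
            * (Real.exp (-x ^ 2 / 2) * Hlamj.eval x / Hlam.eval x) := by
  rintro Hlam Hlamj rfl rfl x hx
  rw [schrodinger_gaussian_mul_eval_div _ _ hx,
    hermiteBracket_polyWronskian_pHermite hk.injective j]
  simp only [eval_mul, eval_C]
  field_simp
  ring

theorem stmt1 (n : ℕ) (k : Fin n → ℕ) (hk : StrictMono k)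
    (j : ℕ) (hj : ∀ i : Fin n, j ≠ k i) :
    ∀ Hlam Hlamj : Polynomial ℝ,
      Hlam = polyWronskian (fun i => pHermite ℝ (k i)) →
      Hlamj = polyWronskian (Fin.snoc (fun i => pHermite ℝ (k i)) (pHermite ℝ j)) →
      ∀ x : ℝ, Hlam.eval x ≠ 0 →
        -(deriv (deriv (fun t : ℝ =>
              Real.exp (-t ^ 2 / 2) * Hlamj.eval t / Hlam.eval t)) x)
          + (x ^ 2 + 2 * ((derivative Hlam).eval x / Hlam.eval x) ^ 2
              - 2 * (derivative (derivative Hlam)).eval x / Hlam.eval x)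
            * (Real.exp (-x ^ 2 / 2) * Hlamj.eval x / Hlam.eval x)
        = (2 * (j : ℝ) - 2 * (n : ℝ) + 1)
            * (Real.exp (-x ^ 2 / 2) * Hlamj.eval x / Hlam.eval x) :=
  stmt1_general n k hk j
end

section
/- Let V be a ℂ-linear subspace of the space of polynomials in one variable over ℂ such that the set D_∞ = ℕ \ { deg p : p ∈ V, p ≠ 0 } of missing degrees is finite. Then for every ζ ∈ ℂ the set D_ζ = ℕ \ { ord_ζ(p) : p ∈ V, p ≠ 0 } of missing orders of vanishing at ζ is finite and its cardinality satisfies |D_ζ| ≤ |D_∞|. -/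
open Polynomial

private lemma sum_smul_eq_zero_aux (f : ℕ → Polynomial ℂ) :
    ∀ s : Finset ℕ, (∀ n ∈ s, f n ≠ 0 ∧ (f n).natDegree = n) →
      ∀ c : ℕ → ℂ, (∑ n ∈ s, c n • f n) = 0 → ∀ n ∈ s, c n = 0 := by
  intro s
  induction s using Finset.strongInduction with
  | _ s ih =>
    intro hs c hsum n hn
    have hne : s.Nonempty := ⟨n, hn⟩
    set m := s.max' hne with hmdef
    have hm : m ∈ s := s.max'_mem hne
    have hcm : c m = 0 := by
      have h1 : (∑ k ∈ s, c k • f k).coeff m = 0 := by rw [hsum]; simp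
      rw [Polynomial.finset_sum_coeff] at h1
      rw [Finset.sum_eq_single m (fun k hk hkm => by
        have hklt : (f k).natDegree < m := by
          rw [(hs k hk).2]
          exact lt_of_le_of_ne (s.le_max' k hk) hkm
        simp [Polynomial.coeff_smul, Polynomial.coeff_eq_zero_of_natDegree_lt hklt])
        (fun h => absurd hm h)] at h1
      rw [Polynomial.coeff_smul, smul_eq_mul] at h1
      have : (f m).coeff m ≠ 0 := by
        have hlc := Polynomial.leadingCoeff_ne_zero.mpr (hs m hm).1
        rwa [Polynomial.leadingCoeff, (hs m hm).2] at hlc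
      exact (mul_eq_zero.mp h1).resolve_right this
    by_cases hnm : n = m
    · rw [hnm]; exact hcm
    · have hmem : n ∈ s.erase m := Finset.mem_erase.mpr ⟨hnm, hn⟩
      refine ih (s.erase m) (Finset.erase_ssubset hm)
        (fun k hk => hs k (Finset.mem_of_mem_erase hk)) c ?_ n hmem
      have h2 : c m • f m + ∑ k ∈ s.erase m, c k • f k = ∑ k ∈ s, c k • f k :=
        Finset.add_sum_erase s (fun k => c k • f k) hm
      rw [hcm, zero_smul, zero_add] at h2
      rw [h2, hsum]

private lemma key_bound (V : Submodule ℂ (Polynomial ℂ)) (ζ : ℂ) (N : ℕ)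
    (hfin : {n : ℕ | ∃ p ∈ V, p ≠ 0 ∧ p.natDegree = n}ᶜ.Finite) (t : Finset ℕ)
    (htset : ↑t ⊆ {n : ℕ | ∃ p ∈ V, p ≠ 0 ∧ p.rootMultiplicity ζ = n}ᶜ)
    (htN : ∀ n ∈ t, n < N + 1) :
    t.card ≤ hfin.toFinset.card := by
  classical
  set Qdeg : ℕ → Prop := fun n => ∃ p ∈ V, p ≠ 0 ∧ p.natDegree = n with hQdeg
  set Qord : ℕ → Prop := fun n => ∃ p ∈ V, p ≠ 0 ∧ p.rootMultiplicity ζ = n with hQord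
  set A : Finset ℕ := (Finset.range (N + 1)).filter Qdeg with hA
  set B : Finset ℕ := (Finset.range (N + 1)).filter Qord with hB
  -- the chosen polynomial of each attained degree
  set pc : ℕ → Polynomial ℂ := fun n => if h : Qdeg n then h.choose else 0 with hpc
  have hpc_spec : ∀ n, Qdeg n → pc n ∈ V ∧ pc n ≠ 0 ∧ (pc n).natDegree = n := by
    intro n h
    have := h.choose_spec
    simp only [hpc, dif_pos h]
    exact ⟨this.1, this.2.1, this.2.2⟩
  have hA_spec : ∀ a ∈ A, pc a ∈ V ∧ pc a ≠ 0 ∧ (pc a).natDegree = a := by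
    intro a ha
    exact hpc_spec a (Finset.mem_filter.mp ha).2
  -- the linear maps
  set Θ : (↥A → ℂ) →ₗ[ℂ] Polynomial ℂ :=
    ∑ a : ↥A, (LinearMap.proj a).smulRight (pc ↑a) with hΘ
  set Ψ : Polynomial ℂ →ₗ[ℂ] (↥B → ℂ) :=
    LinearMap.pi (fun b => (Polynomial.lcoeff ℂ ↑b).comp (Polynomial.taylor ζ)) with hΨ
  have hΘ_apply : ∀ c : ↥A → ℂ, Θ c = ∑ a : ↥A, c a • pc ↑a := by
    intro c
    simp [hΘ, LinearMap.sum_apply, LinearMap.smulRight_apply, LinearMap.proj_apply]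
  have hinj : Function.Injective (Ψ.comp Θ) := by
    rw [← LinearMap.ker_eq_bot, LinearMap.ker_eq_bot']
    intro c hc
    rw [LinearMap.comp_apply] at hc
    set q : Polynomial ℂ := Θ c with hq
    by_cases hq0 : q = 0
    · -- use linear independence of distinct degrees
      set c' : ℕ → ℂ := fun n => if h : n ∈ A then c ⟨n, h⟩ else 0 with hc'
      have hsum : (∑ n ∈ A, c' n • pc n) = 0 := by
        rw [← Finset.sum_coe_sort A (fun n => c' n • pc n)]
        have : ∀ a : ↥A, c' ↑a • pc ↑a = c a • pc ↑a := by
          intro a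
          simp [hc', dif_pos a.2]
        rw [Finset.sum_congr rfl (fun a _ => this a), ← hΘ_apply c, ← hq, hq0]
      have hzero := sum_smul_eq_zero_aux pc A (fun n hn => (hA_spec n hn).2) c' hsum
      funext a
      have := hzero ↑a a.2
      simpa [hc', dif_pos a.2] using this
    · exfalso
      have hqV : q ∈ V := by
        rw [hq, hΘ_apply]
        exact Submodule.sum_mem V (fun a _ => Submodule.smul_mem V _ (hA_spec a a.2).1)
      have hqN : q.natDegree ≤ N := by
        rw [hq, hΘ_apply]
        refine Polynomial.natDegree_sum_le_of_forall_le _ _ (fun a _ => ?_)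
        refine le_trans (Polynomial.natDegree_smul_le _ _) ?_
        rw [(hA_spec a a.2).2.2]
        exact Nat.lt_succ_iff.mp (Finset.mem_range.mp (Finset.mem_filter.mp a.2).1)
      set m := q.rootMultiplicity ζ with hmdef
      have htay : Polynomial.taylor ζ q ≠ 0 := by
        intro h
        exact hq0 (Polynomial.taylor_injective ζ (by rw [h, map_zero]))
      have hm_eq : m = (Polynomial.taylor ζ q).natTrailingDegree := by
        rw [hmdef, Polynomial.rootMultiplicity_eq_natTrailingDegree, Polynomial.taylor_apply]
      have hmcoeff : (Polynomial.taylor ζ q).coeff m ≠ 0 := by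
        rw [hm_eq]
        exact Polynomial.coeff_natTrailingDegree_ne_zero.mpr htay
      have hmN : m < N + 1 := by
        rw [hm_eq]
        calc (Polynomial.taylor ζ q).natTrailingDegree
            ≤ (Polynomial.taylor ζ q).natDegree := Polynomial.natTrailingDegree_le_natDegree _
          _ = q.natDegree := Polynomial.natDegree_taylor q ζ
          _ < N + 1 := Nat.lt_succ_of_le hqN
      have hmB : m ∈ B := Finset.mem_filter.mpr ⟨Finset.mem_range.mpr hmN, ⟨q, hqV, hq0, rfl⟩⟩
      have : Ψ q ⟨m, hmB⟩ = 0 := by rw [hc]; rfl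
      rw [hΨ] at this
      simp only [LinearMap.pi_apply, LinearMap.comp_apply, Polynomial.lcoeff_apply] at this
      exact hmcoeff this
  have hcard_AB : A.card ≤ B.card := by
    have h1 : Module.finrank ℂ (↥A → ℂ) ≤ Module.finrank ℂ (↥B → ℂ) :=
      LinearMap.finrank_le_finrank_of_injective hinj
    rwa [Module.finrank_pi, Module.finrank_pi, Fintype.card_coe, Fintype.card_coe] at h1
  -- counting
  have htB : t ⊆ Finset.range (N + 1) \ B := by
    intro n hn
    rw [Finset.mem_sdiff]
    refine ⟨Finset.mem_range.mpr (htN n hn), fun hnB => ?_⟩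
    exact htset hn (Finset.mem_filter.mp hnB).2
  have hAD : Finset.range (N + 1) \ A ⊆ hfin.toFinset := by
    intro n hn
    rw [Finset.mem_sdiff] at hn
    rw [Set.Finite.mem_toFinset]
    intro hQ
    exact hn.2 (Finset.mem_filter.mpr ⟨hn.1, hQ⟩)
  calc t.card ≤ (Finset.range (N + 1) \ B).card := Finset.card_le_card htB
    _ = (N + 1) - B.card := by rw [Finset.card_sdiff_of_subset (Finset.filter_subset _ _),
          Finset.card_range]
    _ ≤ (N + 1) - A.card := Nat.sub_le_sub_left hcard_AB _
    _ = (Finset.range (N + 1) \ A).card := by rw [Finset.card_sdiff_of_subset (Finset.filter_subset _ _),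
          Finset.card_range]
    _ ≤ hfin.toFinset.card := Finset.card_le_card hAD

theorem stmt5 (V : Submodule ℂ (Polynomial ℂ))
    (hfin : {n : ℕ | ∃ p ∈ V, p ≠ 0 ∧ p.natDegree = n}ᶜ.Finite) :
    ∀ ζ : ℂ,
      {n : ℕ | ∃ p ∈ V, p ≠ 0 ∧ p.rootMultiplicity ζ = n}ᶜ.Finite ∧
      {n : ℕ | ∃ p ∈ V, p ≠ 0 ∧ p.rootMultiplicity ζ = n}ᶜ.ncard ≤
        {n : ℕ | ∃ p ∈ V, p ≠ 0 ∧ p.natDegree = n}ᶜ.ncard := by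
  intro ζ
  have bound : ∀ t : Finset ℕ, ↑t ⊆ {n : ℕ | ∃ p ∈ V, p ≠ 0 ∧ p.rootMultiplicity ζ = n}ᶜ →
      t.card ≤ hfin.toFinset.card := by
    intro t ht
    refine key_bound V ζ (t.sup id) hfin t ht (fun n hn => ?_)
    exact Nat.lt_succ_of_le (Finset.le_sup (f := id) hn)
  have hFin : {n : ℕ | ∃ p ∈ V, p ≠ 0 ∧ p.rootMultiplicity ζ = n}ᶜ.Finite := by
    rw [← Set.not_infinite]
    intro h
    obtain ⟨t, hts, htc⟩ := h.exists_subset_card_eq (hfin.toFinset.card + 1)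
    have := bound t hts
    omega
  refine ⟨hFin, ?_⟩
  rw [Set.ncard_eq_toFinset_card _ hFin, Set.ncard_eq_toFinset_card _ hfin]
  exact bound hFin.toFinset (by simp)
end

section
/- Let q(z), r(z) be complex rational functions such that the operator T[y] = y'' + q(z)·y' + r(z)·y is primitive and solvable by polynomials, let V be the ℂ-span of all polynomial eigenfunctions of T, and let ζ ∈ ℂ be a pole of q or of r. Then there is an integer ν ≥ 1 such that: (i) { ord_ζ(p) : p ∈ V, p ≠ 0 } = ℕ \ {1, 3, 5, …, 2ν−1}; (ii) the rational function (z−ζ)·q(z) has no pole at ζ and its value at ζ equals −2ν; (iii) the rational function (z−ζ)·r(z) has no pole at ζ. In particular every pole of T is a regular singular point. -/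
open Polynomial MeasureTheory

/-- The action of the operator `T[y] = p·y'' + q·y' + r·y` on a polynomial,
viewed inside the field of rational functions. -/
noncomputable def ratApply (p q r : RatFunc ℂ) (y : Polynomial ℂ) : RatFunc ℂ :=
  p * algebraMap (Polynomial ℂ) (RatFunc ℂ) (derivative (derivative y))
    + q * algebraMap (Polynomial ℂ) (RatFunc ℂ) (derivative y)
    + r * algebraMap (Polynomial ℂ) (RatFunc ℂ) y

/-- A polynomial eigenfunction of `T[y] = p·y'' + q·y' + r·y`. -/
def IsPolyEigenfunction (p q r : RatFunc ℂ) (y : Polynomial ℂ) : Prop :=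
  y ≠ 0 ∧ ∃ lam : ℂ, ratApply p q r y = RatFunc.C lam * algebraMap (Polynomial ℂ) (RatFunc ℂ) y

/-- `T` is solvable by polynomials: for all but finitely many `n` there is a
polynomial eigenfunction of degree `n`. -/
def SolvableByPolynomials (p q r : RatFunc ℂ) : Prop :=
  ∃ F : Finset ℕ, ∀ n : ℕ, n ∉ F →
    ∃ y : Polynomial ℂ, y.natDegree = n ∧ IsPolyEigenfunction p q r y

/-- `T` is primitive: no single point `ξ ∈ ℂ` is a root of every polynomial eigenfunction. -/
def Primitive (p q r : RatFunc ℂ) : Prop :=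
  ¬ ∃ ξ : ℂ, ∀ y : Polynomial ℂ, IsPolyEigenfunction p q r y → y.eval ξ = 0

/-!
Let `ordAt ζ` be the `(z - ζ)`-adic valuation on `ℂ(z)` and `V` the span of the polynomial
eigenfunctions, which `T` maps into itself. Primitivity gives `u ∈ V` with `u(ζ) ≠ 0`, and
`r u = T u - u'' - q u'` shows `ord r ≥ min 0 (ord q)`; so `ζ` is a pole of `q`. Since `V` contains
polynomials of almost every degree, a dimension count shows that almost every `m` is the order at
`ζ` of some element of `V`. If `ord q = -d ≤ -2`, the term `q y'` dominates `T y`, so `T` lowers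
orders by `d + 1 ≥ 3`, and all orders would be multiples of `d + 1`: impossible. Hence `q` has a
simple pole, with residue `a` say, and for `y` of order `m ≥ 1` the leading term of `(z - ζ)² T y`
is `c m (m - 1 + a) (z - ζ)^m` with `c ≠ 0`: `T y` has order `m - 2` unless `m - 1 + a = 0`. So `1` is not an
order, and if `L` is the largest missing order then `a = -(L + 1)` and the missing orders are the
odd numbers up to `L`.
-/

section OrderAtPoint

variable {K : Type*} [Field K] {ζ : K}

open Classical in
noncomputable def ordAtFun (ζ : K) (f : RatFunc K) : WithTop ℤ :=
  if f = 0 then ⊤ else ((f.num.rootMultiplicity ζ : ℤ) - f.denom.rootMultiplicity ζ : ℤ)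

theorem ordAtFun_div_algebraMap {p s : K[X]} (hp : p ≠ 0) (hs : s ≠ 0) :
    ordAtFun ζ (algebraMap K[X] (RatFunc K) p / algebraMap K[X] (RatFunc K) s)
      = ((p.rootMultiplicity ζ : ℤ) - s.rootMultiplicity ζ : ℤ) := by
  set f := algebraMap K[X] (RatFunc K) p / algebraMap K[X] (RatFunc K) s
  have hf : f ≠ 0 := div_ne_zero (RatFunc.algebraMap_ne_zero hp) (RatFunc.algebraMap_ne_zero hs)
  have key := congrArg (rootMultiplicity ζ)
    ((RatFunc.num_mul_eq_mul_denom_iff hs).mpr rfl : f.num * s = p * f.denom)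
  rw [rootMultiplicity_mul (mul_ne_zero (RatFunc.num_ne_zero hf) hs),
    rootMultiplicity_mul (mul_ne_zero hp f.denom_ne_zero)] at key
  simp only [ordAtFun, hf, if_false, WithTop.coe_inj]
  omega

theorem ordAtFun_eq_of_ne_zero {f : RatFunc K} (hf : f ≠ 0) :
    ordAtFun ζ f = ((f.num.rootMultiplicity ζ : ℤ) - f.denom.rootMultiplicity ζ : ℤ) := by
  simp [ordAtFun, hf]

noncomputable def ordAt (ζ : K) : AddValuation (RatFunc K) (WithTop ℤ) :=
  AddValuation.of (ordAtFun ζ) (by simp [ordAtFun])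
    (by simp [ordAtFun, rootMultiplicity_eq_zero])
    (fun f g => by
      rcases eq_or_ne f 0 with rfl | hf
      · rw [zero_add]; exact min_le_right _ _
      rcases eq_or_ne g 0 with rfl | hg
      · rw [add_zero]; exact min_le_left _ _
      rcases eq_or_ne (f + g) 0 with hfg | hfg
      · simp [ordAtFun, hfg]
      have hsum : f + g = algebraMap K[X] (RatFunc K) (f.num * g.denom + f.denom * g.num)
          / algebraMap K[X] (RatFunc K) (f.denom * g.denom) := by
        conv_lhs => rw [← RatFunc.num_div_denom f, ← RatFunc.num_div_denom g]
        rw [div_add_div _ _ (RatFunc.algebraMap_ne_zero f.denom_ne_zero)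
          (RatFunc.algebraMap_ne_zero g.denom_ne_zero), map_add, map_mul, map_mul, map_mul]
      have hN : f.num * g.denom + f.denom * g.num ≠ 0 := by
        rintro h
        rw [h, map_zero, zero_div] at hsum
        exact hfg hsum
      have hmin := rootMultiplicity_add ζ hN
      rw [rootMultiplicity_mul (mul_ne_zero (RatFunc.num_ne_zero hf) g.denom_ne_zero),
        rootMultiplicity_mul (mul_ne_zero f.denom_ne_zero (RatFunc.num_ne_zero hg))] at hmin
      rw [ordAtFun_eq_of_ne_zero hf, ordAtFun_eq_of_ne_zero hg, hsum,
        ordAtFun_div_algebraMap hN (mul_ne_zero f.denom_ne_zero g.denom_ne_zero),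
        rootMultiplicity_mul (mul_ne_zero f.denom_ne_zero g.denom_ne_zero),
        ← WithTop.coe_min, WithTop.coe_le_coe]
      omega)
    (fun f g => by
      rcases eq_or_ne f 0 with rfl | hf
      · simp [ordAtFun]
      rcases eq_or_ne g 0 with rfl | hg
      · simp [ordAtFun]
      have hprod : f * g = algebraMap K[X] (RatFunc K) (f.num * g.num)
          / algebraMap K[X] (RatFunc K) (f.denom * g.denom) := by
        conv_lhs => rw [← RatFunc.num_div_denom f, ← RatFunc.num_div_denom g]
        rw [div_mul_div_comm, map_mul, map_mul]
      rw [ordAtFun_eq_of_ne_zero hf, ordAtFun_eq_of_ne_zero hg, hprod,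
        ordAtFun_div_algebraMap (mul_ne_zero (RatFunc.num_ne_zero hf) (RatFunc.num_ne_zero hg))
          (mul_ne_zero f.denom_ne_zero g.denom_ne_zero),
        rootMultiplicity_mul (mul_ne_zero (RatFunc.num_ne_zero hf) (RatFunc.num_ne_zero hg)),
        rootMultiplicity_mul (mul_ne_zero f.denom_ne_zero g.denom_ne_zero), ← WithTop.coe_add,
        WithTop.coe_inj]
      omega)

theorem ordAt_eq_of_ne_zero {f : RatFunc K} (hf : f ≠ 0) :
    ordAt ζ f = ((f.num.rootMultiplicity ζ : ℤ) - f.denom.rootMultiplicity ζ : ℤ) :=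
  ordAtFun_eq_of_ne_zero hf

theorem ordAt_algebraMap {p : K[X]} (hp : p ≠ 0) :
    ordAt ζ (algebraMap K[X] (RatFunc K) p) = (p.rootMultiplicity ζ : ℤ) := by
  have h := ordAtFun_div_algebraMap (ζ := ζ) hp (one_ne_zero (α := K[X]))
  rw [map_one, div_one, ← Polynomial.C_1, rootMultiplicity_C, Nat.cast_zero, sub_zero] at h
  exact h

theorem rootMultiplicity_le_ordAt_algebraMap (p : K[X]) :
    ((p.rootMultiplicity ζ : ℤ) : WithTop ℤ) ≤ ordAt ζ (algebraMap K[X] (RatFunc K) p) := by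
  rcases eq_or_ne p 0 with rfl | hp
  · simp
  · exact (ordAt_algebraMap hp).ge

theorem ordAt_algebraMap_nonneg (p : K[X]) : 0 ≤ ordAt ζ (algebraMap K[X] (RatFunc K) p) :=
  le_trans (by exact_mod_cast Nat.zero_le _) (rootMultiplicity_le_ordAt_algebraMap p)

theorem ordAt_X_sub_C : ordAt ζ (algebraMap K[X] (RatFunc K) (X - C ζ)) = 1 := by
  rw [ordAt_algebraMap (X_sub_C_ne_zero ζ), rootMultiplicity_X_sub_C_self]
  rfl

theorem denom_eval_ne_zero_of_ordAt_nonneg {f : RatFunc K} (h : 0 ≤ ordAt ζ f) :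
    f.denom.eval ζ ≠ 0 := by
  rcases eq_or_ne f 0 with rfl | hf
  · simp
  intro hden
  have hnum : f.num.eval ζ ≠ 0 := fun hnum => by
    obtain ⟨a, b, hab⟩ := f.isCoprime_num_denom
    simpa [hnum, hden] using congrArg (eval ζ) hab
  rw [ordAt_eq_of_ne_zero hf, rootMultiplicity_eq_zero hnum,
    ← WithTop.coe_zero, WithTop.coe_le_coe] at h
  have := (rootMultiplicity_pos f.denom_ne_zero).mpr hden
  omega

theorem ordAt_eq_zero_iff_eval_ne_zero {f : RatFunc K} (h : 0 ≤ ordAt ζ f) :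
    ordAt ζ f = 0 ↔ RatFunc.eval (RingHom.id K) ζ f ≠ 0 := by
  have hden := denom_eval_ne_zero_of_ordAt_nonneg h
  rcases eq_or_ne f 0 with rfl | hf
  · simp
  rw [ordAt_eq_of_ne_zero hf, rootMultiplicity_eq_zero hden, Nat.cast_zero, sub_zero,
    ← WithTop.coe_zero, WithTop.coe_inj, Nat.cast_eq_zero, RatFunc.eval, eval₂_id, eval₂_id,
    div_ne_zero_iff, and_iff_left hden]
  exact ⟨fun h0 hroot => ((rootMultiplicity_pos (RatFunc.num_ne_zero hf)).mpr hroot).ne' h0,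
    rootMultiplicity_eq_zero⟩

theorem ordAt_X_sub_C_pow_mul (n : ℕ) (f : RatFunc K) :
    ordAt ζ (algebraMap K[X] (RatFunc K) ((X - C ζ) ^ n) * f)
      = ((n : ℤ) : WithTop ℤ) + ordAt ζ f := by
  rw [(ordAt ζ).map_mul, ordAt_algebraMap (pow_ne_zero _ (X_sub_C_ne_zero ζ)),
    rootMultiplicity_X_sub_C_pow]

theorem ordAt_eq_of_X_sub_C_pow_mul {f : RatFunc K} {n : ℕ} {e : ℤ}
    (h : ordAt ζ (algebraMap K[X] (RatFunc K) ((X - C ζ) ^ n) * f) = e) :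
    ordAt ζ f = ↑(e - n) := by
  rw [ordAt_X_sub_C_pow_mul] at h
  generalize ordAt ζ f = x at h ⊢
  induction x using WithTop.recTopCoe with
  | top => simp at h
  | coe x =>
    rw [← WithTop.coe_add, WithTop.coe_inj] at h
    rw [WithTop.coe_inj]
    omega

theorem ordAt_C_add_eq_zero {f : RatFunc K} (hf : 0 ≤ ordAt ζ f) {c : K}
    (hc : c + RatFunc.eval (RingHom.id K) ζ f ≠ 0) : ordAt ζ (RatFunc.C c + f) = 0 := by
  have hC : 0 ≤ ordAt ζ (RatFunc.C c) := by
    rw [← RatFunc.algebraMap_C]; exact ordAt_algebraMap_nonneg _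
  have hsum : 0 ≤ ordAt ζ (RatFunc.C c + f) := AddValuation.map_le_add _ hC hf
  rw [ordAt_eq_zero_iff_eval_ne_zero hsum, RatFunc.eval_add (RingHom.id K) ζ
    (denom_eval_ne_zero_of_ordAt_nonneg hC) (denom_eval_ne_zero_of_ordAt_nonneg hf), RatFunc.eval_C]
  exact hc

theorem ordAt_algebraMap_eq_zero {p : K[X]} (hp : p.eval ζ ≠ 0) :
    ordAt ζ (algebraMap K[X] (RatFunc K) p) = 0 := by
  rw [ordAt_algebraMap (fun h => hp (by simp [h])), rootMultiplicity_eq_zero hp]; rfl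

theorem rootMultiplicity_eq_of_ordAt_algebraMap_eq {P : K[X]} {e : ℤ}
    (h : ordAt ζ (algebraMap K[X] (RatFunc K) P) = e) :
    P ≠ 0 ∧ (P.rootMultiplicity ζ : ℤ) = e := by
  have hP : P ≠ 0 := by rintro rfl; simp at h
  exact ⟨hP, WithTop.coe_inj.mp ((ordAt_algebraMap hP).symm.trans h)⟩

end OrderAtPoint

section VanishingOrders

variable {K : Type*} [Field K]

def vanishingOrders (V : Submodule K K[X]) (ζ : K) : Set ℕ :=
  {m | ∃ p ∈ V, p ≠ 0 ∧ p.rootMultiplicity ζ = m}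

theorem rootMultiplicity_le_natDegree (p : K[X]) (ζ : K) :
    p.rootMultiplicity ζ ≤ p.natDegree := by
  classical
  rw [← count_roots]
  exact (Multiset.count_le_card _ _).trans (card_roots' p)

theorem taylor_coeff_rootMultiplicity_ne_zero {p : K[X]} (hp : p ≠ 0) (ζ : K) :
    (taylor ζ p).coeff (p.rootMultiplicity ζ) ≠ 0 := by
  rw [rootMultiplicity_eq_natTrailingDegree, ← taylor_apply]
  exact trailingCoeff_nonzero_iff_nonzero.mpr ((taylor_injective ζ).ne_iff' (map_zero _) |>.mpr hp)

theorem finrank_le_card_of_vanishingOrders_subset {W : Submodule K K[X]} [FiniteDimensional K W]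
    {ζ : K} {S : Finset ℕ} (hS : vanishingOrders W ζ ⊆ S) :
    Module.finrank K W ≤ S.card := by
  let L : W →ₗ[K] (S → K) :=
    (LinearMap.pi fun m : S => (lcoeff K m).comp (taylor ζ)).comp W.subtype
  have hL : Function.Injective L := by
    rw [← LinearMap.ker_eq_bot, Submodule.eq_bot_iff]
    rintro ⟨p, hpW⟩ hp
    by_contra hp0
    have hp0' : p ≠ 0 := fun h => hp0 (Subtype.ext h)
    have hmS : p.rootMultiplicity ζ ∈ S := hS ⟨p, hpW, hp0', rfl⟩
    exact taylor_coeff_rootMultiplicity_ne_zero hp0' ζ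
      (congrFun (LinearMap.mem_ker.mp hp) ⟨_, hmS⟩)
  simpa using LinearMap.finrank_le_finrank_of_injective hL

theorem linearIndependent_of_injective_degree {ι : Type*} {p : ι → K[X]}
    (hp0 : ∀ i, p i ≠ 0) (hp : Function.Injective (degree ∘ p)) : LinearIndependent K p := by
  classical
  rw [linearIndependent_iff']
  intro s g hsum i hi
  by_contra hgi
  have hdeg : ∀ j, g j ≠ 0 → degree (g j • p j) = degree (p j) := fun j hj => by
    rw [smul_eq_C_mul, degree_C_mul hj]
  have hsup := degree_sum_eq_of_disjoint (fun j => g j • p j) s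
    (fun j ⟨_, hj⟩ k ⟨_, hk⟩ hjk h => hjk (hp (by
      simpa [hdeg j (left_ne_zero_of_smul hj), hdeg k (left_ne_zero_of_smul hk)] using h)))
  rw [hsum, degree_zero, eq_comm, Finset.sup_eq_bot_iff] at hsup
  have := hsup i hi
  rw [hdeg i hgi, degree_eq_bot] at this
  exact hp0 i this

theorem Set.Finite.of_forall_card_filter_range_le {s : Set ℕ} [DecidablePred (· ∈ s)] {c : ℕ}
    (h : ∀ D, ((Finset.range D).filter (· ∈ s)).card ≤ c) : s.Finite := by
  by_contra hs
  obtain ⟨t, hts, htc⟩ := Set.Infinite.exists_subset_card_eq hs (c + 1)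
  have hsub : t ⊆ (Finset.range (t.sup id + 1)).filter (· ∈ s) := fun m hm =>
    Finset.mem_filter.mpr ⟨Finset.mem_range.mpr (Nat.lt_succ_of_le (Finset.le_sup (f := id) hm)),
      hts hm⟩
  have := (Finset.card_le_card hsub).trans (h _)
  omega

theorem finite_compl_vanishingOrders {V : Submodule K K[X]} {F : Finset ℕ}
    (hV : ∀ n ∉ F, ∃ p ∈ V, p ≠ 0 ∧ p.natDegree = n) (ζ : K) :
    (vanishingOrders V ζ)ᶜ.Finite := by
  classical
  choose y hyV hy0 hydeg using hV
  refine Set.Finite.of_forall_card_filter_range_le (c := F.card) fun D => ?_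
  set S := Finset.range D \ F
  let b : S → K[X] := fun n => y n (Finset.mem_sdiff.mp n.2).2
  have hb : LinearIndependent K b := linearIndependent_of_injective_degree (fun n => hy0 _ _)
    (fun n n' h => Subtype.ext <| by
      simpa [b, degree_eq_natDegree (hy0 _ _), hydeg] using h)
  let W := Submodule.span K (Set.range b)
  have hWV : W ≤ V := Submodule.span_le.mpr (Set.range_subset_iff.mpr fun n => hyV _ _)
  have hWdeg : W ≤ degreeLT K D := Submodule.span_le.mpr <| Set.range_subset_iff.mpr fun n => by
    rw [SetLike.mem_coe, mem_degreeLT, degree_eq_natDegree (hy0 _ _), hydeg, Nat.cast_lt]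
    exact Finset.mem_range.mp (Finset.mem_sdiff.mp n.2).1
  have hcard : S.card ≤ ((Finset.range D).filter (· ∈ vanishingOrders V ζ)).card := by
    have : FiniteDimensional K W := FiniteDimensional.span_of_finite K (Set.finite_range b)
    rw [← Fintype.card_coe S, ← finrank_span_eq_card hb]
    refine finrank_le_card_of_vanishingOrders_subset (ζ := ζ) ?_
    rintro _ ⟨p, hpW, hp0, rfl⟩
    have hpD := mem_degreeLT.mp (hWdeg hpW)
    rw [degree_eq_natDegree hp0, Nat.cast_lt] at hpD
    exact Finset.mem_filter.mpr ⟨Finset.mem_range.mpr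
      ((rootMultiplicity_le_natDegree p ζ).trans_lt hpD), p, hWV hpW, hp0, rfl⟩
  have hsplit :=
    Finset.card_filter_add_card_filter_not (s := Finset.range D) (· ∈ vanishingOrders V ζ)
  have hS : D - F.card ≤ S.card := by simpa using Finset.le_card_sdiff F (Finset.range D)
  rw [Finset.card_range] at hsplit
  simp only [Set.mem_compl_iff]
  omega

end VanishingOrders

section DerivativeExpansion

theorem X_sub_C_mul_derivative_X_sub_C_pow_mul {R : Type*} [CommRing R] (ζ : R) (n : ℕ)
    (f : R[X]) :
    (X - C ζ) * derivative ((X - C ζ) ^ n * f)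
      = (X - C ζ) ^ n * (C (n : R) * f + (X - C ζ) * derivative f) := by
  rw [derivative_mul, derivative_X_sub_C_pow]
  rcases n with _ | n
  · simp
  · simp only [Nat.add_sub_cancel]
    ring

variable {K : Type*} [Field K] [CharZero K] {ζ : K}

theorem exists_derivative_expansion {w : K[X]} (hw : w ≠ 0) (hm : 1 ≤ w.rootMultiplicity ζ) :
    ∃ B : K[X], B.eval ζ ≠ 0 ∧
      (X - C ζ) * derivative w = (X - C ζ) ^ w.rootMultiplicity ζ * B ∧
      (X - C ζ) ^ 2 * derivative (derivative w) = (X - C ζ) ^ w.rootMultiplicity ζ *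
        (C ((w.rootMultiplicity ζ : K) - 1) * B + (X - C ζ) * derivative B) := by
  set m := w.rootMultiplicity ζ
  obtain ⟨v, hwv, hv⟩ := w.exists_eq_pow_rootMultiplicity_mul_and_not_dvd hw ζ
  set B := C (m : K) * v + (X - C ζ) * derivative v
  have hB : B.eval ζ ≠ 0 := by
    simpa [B, Nat.one_le_iff_ne_zero.mp hm, dvd_iff_isRoot] using hv
  have h1 : (X - C ζ) * derivative w = (X - C ζ) ^ m * B := by
    rw [hwv]; exact X_sub_C_mul_derivative_X_sub_C_pow_mul ζ m v
  have h2 := X_sub_C_mul_derivative_X_sub_C_pow_mul ζ m B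
  have h3 : derivative ((X - C ζ) * derivative w)
      = derivative w + (X - C ζ) * derivative (derivative w) := by
    rw [derivative_mul, derivative_X_sub_C, one_mul]
  rw [h1] at h3
  refine ⟨B, hB, h1, ?_⟩
  rw [C_sub, C_1]
  linear_combination -(X - C ζ) * h3 + h2 - h1

end DerivativeExpansion

section Combinatorics

theorem dvd_of_forall_mem_exists_add {M : Set ℕ} {t : ℕ} (ht : 0 < t)
    (h : ∀ m ∈ M, m ≠ 0 → ∃ m' ∈ M, m' + t = m) : ∀ m ∈ M, t ∣ m := by
  intro m
  induction m using Nat.strong_induction_on with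
  | _ m ih =>
    intro hm
    rcases eq_or_ne m 0 with rfl | hm0
    · exact dvd_zero t
    obtain ⟨m', hm', rfl⟩ := h m hm hm0
    exact Nat.dvd_add (ih m' (by omega) hm') dvd_rfl

theorem exists_eq_odd_gaps {M : Set ℕ} (h1 : 1 ∉ M) (hfin : Mᶜ.Finite) {a : ℂ}
    (hdown : ∀ k : ℕ, k + 2 ∈ M → (k : ℂ) + 1 + a ≠ 0 → k ∈ M) :
    ∃ ν : ℕ, 1 ≤ ν ∧ a = -(2 * (ν : ℂ)) ∧
      M = {m : ℕ | ¬(m % 2 = 1 ∧ m < 2 * ν)} := by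
  obtain ⟨L, hLM, hLmax⟩ : ∃ L ∉ M, ∀ m ∉ M, m ≤ L :=
    ⟨_, hfin.mem_toFinset.mp (Finset.max'_mem _ ⟨1, hfin.mem_toFinset.mpr h1⟩),
      fun m hm => Finset.le_max' _ m (hfin.mem_toFinset.mpr hm)⟩
  have hmem : ∀ m, L < m → m ∈ M := fun m hm => by
    by_contra h; exact absurd (hLmax m h) (by omega)
  have ha : a = -((L : ℂ) + 1) := by
    by_contra ha
    exact hLM (hdown L (hmem _ (by omega)) fun h => ha (by linear_combination h))
  have hstep : ∀ k, k ≠ L → k ∉ M → k + 2 ∉ M := fun k hk hkM hk2 => hkM <|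
    hdown k hk2 fun h => hk (by exact_mod_cast (by linear_combination h - ha : (k : ℂ) = L))
  have hclimb : ∀ d c, L - c = d → c ∉ M → ∃ j, c + 2 * j = L := by
    intro d
    induction d using Nat.strong_induction_on with
    | _ d ih =>
      intro c hd hc
      rcases eq_or_ne c L with rfl | hcL
      · exact ⟨0, rfl⟩
      have hc2 := hstep c hcL hc
      have := hLmax c hc
      have := hLmax _ hc2
      obtain ⟨j, hj⟩ := ih (L - (c + 2)) (by omega) (c + 2) rfl hc2
      exact ⟨j + 1, by omega⟩
  have hLodd : L % 2 = 1 := by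
    obtain ⟨j, hj⟩ := hclimb _ 1 rfl h1
    omega
  have hodd : ∀ j, 2 * j + 1 ≤ L → 2 * j + 1 ∉ M := by
    intro j
    induction j with
    | zero => exact fun _ => h1
    | succ j ih =>
      intro hj
      rw [show 2 * (j + 1) + 1 = 2 * j + 1 + 2 by ring]
      exact hstep _ (by omega) (ih (by omega))
  refine ⟨(L + 1) / 2, by omega, ?_, ?_⟩
  · rw [ha]
    have : ((L + 1 : ℕ) : ℂ) = ((2 * ((L + 1) / 2) : ℕ) : ℂ) := by congr 1; omega
    push_cast at this
    rw [this]
  · ext m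
    constructor
    · rintro hm ⟨hmodd, hmL⟩
      obtain ⟨j, rfl⟩ : ∃ j, m = 2 * j + 1 := ⟨m / 2, by omega⟩
      exact hodd j (by omega) hm
    · intro h
      by_contra hm
      obtain ⟨j, hj⟩ := hclimb _ m rfl hm
      exact h ⟨by omega, by omega⟩

end Combinatorics

section PolynomialEigenfunctions

local notation "ι" => algebraMap ℂ[X] (RatFunc ℂ)

def IsRatApplyInvariant (q r : RatFunc ℂ) (V : Submodule ℂ ℂ[X]) : Prop :=
  ∀ w ∈ V, ∃ P ∈ V, ratApply 1 q r w = ι P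

variable {q r : RatFunc ℂ} {ζ : ℂ} {V : Submodule ℂ ℂ[X]}

theorem isRatApplyInvariant_span_eigenfunctions :
    IsRatApplyInvariant q r (Submodule.span ℂ {y : ℂ[X] | IsPolyEigenfunction 1 q r y}) := by
  intro w hw
  induction hw using Submodule.span_induction with
  | mem y hy =>
    obtain ⟨lam, hlam⟩ := hy.2
    refine ⟨lam • y, Submodule.smul_mem _ _ (Submodule.subset_span hy), ?_⟩
    rw [hlam, smul_eq_C_mul, map_mul, RatFunc.algebraMap_C]
  | zero => exact ⟨0, Submodule.zero_mem _, by simp [ratApply]⟩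
  | add x z _ _ ihx ihz =>
    obtain ⟨P₁, hP₁, h₁⟩ := ihx
    obtain ⟨P₂, hP₂, h₂⟩ := ihz
    refine ⟨P₁ + P₂, Submodule.add_mem _ hP₁ hP₂, ?_⟩
    simp only [ratApply, map_add] at h₁ h₂ ⊢
    linear_combination h₁ + h₂
  | smul a x _ ih =>
    obtain ⟨P, hP, h⟩ := ih
    refine ⟨a • P, Submodule.smul_mem _ _ hP, ?_⟩
    simp only [ratApply, smul_eq_C_mul, derivative_C_mul, map_mul, RatFunc.algebraMap_C] at h ⊢
    linear_combination RatFunc.C a * h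

theorem min_le_ordAt_of_ratApply_eq {u P : ℂ[X]} (hu : u.eval ζ ≠ 0)
    (h : ratApply 1 q r u = ι P) : min 0 (ordAt ζ q) ≤ ordAt ζ r := by
  have hru : r * ι u = ι P - (ι (derivative (derivative u)) + q * ι (derivative u)) := by
    rw [← h, ratApply]; ring
  have key := congrArg (ordAt ζ) hru
  rw [(ordAt ζ).map_mul, ordAt_algebraMap_eq_zero hu, add_zero] at key
  rw [key]
  refine AddValuation.map_le_sub _ (min_le_left _ _ |>.trans (ordAt_algebraMap_nonneg P))
    (AddValuation.map_le_add _ (min_le_left _ _ |>.trans (ordAt_algebraMap_nonneg _)) ?_)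
  rw [(ordAt ζ).map_mul]
  exact (min_le_right _ _).trans (le_add_of_nonneg_right (ordAt_algebraMap_nonneg _))

theorem X_sub_C_sq_mul_ratApply (w : ℂ[X]) :
    ι ((X - C ζ) ^ 2) * ratApply 1 q r w = ι ((X - C ζ) ^ 2 * derivative (derivative w))
      + ι (X - C ζ) * q * ι ((X - C ζ) * derivative w) + ι ((X - C ζ) ^ 2) * r * ι w := by
  simp only [ratApply, map_mul, map_pow]; ring

theorem le_ordAt_X_sub_C_sq_mul_mul {d : ℤ} (hr : (d : WithTop ℤ) ≤ ordAt ζ r) (w : ℂ[X]) :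
    ((2 + d + w.rootMultiplicity ζ : ℤ) : WithTop ℤ)
      ≤ ordAt ζ (ι ((X - C ζ) ^ 2) * r * ι w) := by
  rw [(ordAt ζ).map_mul, ordAt_X_sub_C_pow_mul, WithTop.coe_add, WithTop.coe_add]
  exact add_le_add (add_le_add_right hr _) (rootMultiplicity_le_ordAt_algebraMap w)

theorem ordAt_ratApply_of_ordAt_le_neg_two {d : ℤ} (hq : ordAt ζ q = d) (hd : d ≤ -2)
    (hr : (d : WithTop ℤ) ≤ ordAt ζ r) {w : ℂ[X]} (hw : w ≠ 0)
    (hm : 1 ≤ w.rootMultiplicity ζ) :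
    ordAt ζ (ratApply 1 q r w) = ↑((w.rootMultiplicity ζ : ℤ) - 1 + d) := by
  obtain ⟨B, hB, h1, h2⟩ := exists_derivative_expansion hw hm
  set m := w.rootMultiplicity ζ
  have hlead :
      ordAt ζ (ι ((X - C ζ) ^ m) * (ι (X - C ζ) * q * ι B)) = ↑((m : ℤ) + 1 + d) := by
    rw [ordAt_X_sub_C_pow_mul, (ordAt ζ).map_mul, (ordAt ζ).map_mul, ordAt_X_sub_C, hq,
      ordAt_algebraMap_eq_zero hB, add_zero, ← WithTop.coe_one, ← WithTop.coe_add,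
      ← WithTop.coe_add]
    congr 1; ring
  have hrest : ↑((m : ℤ) + 1 + d) < ordAt ζ (ι ((X - C ζ) ^ 2 * derivative (derivative w))
      + ι ((X - C ζ) ^ 2) * r * ι w) := by
    refine AddValuation.map_lt_add _ ?_ ((WithTop.coe_lt_coe.mpr (by omega)).trans_le
      (le_ordAt_X_sub_C_sq_mul_mul hr w))
    rw [h2, map_mul, ordAt_X_sub_C_pow_mul]
    exact (WithTop.coe_lt_coe.mpr (by omega)).trans_le
      (le_add_of_nonneg_right (ordAt_algebraMap_nonneg _))
  have hsplit : ι ((X - C ζ) ^ 2) * ratApply 1 q r w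
      = ι ((X - C ζ) ^ m) * (ι (X - C ζ) * q * ι B) + (ι ((X - C ζ) ^ 2 *
        derivative (derivative w)) + ι ((X - C ζ) ^ 2) * r * ι w) := by
    rw [X_sub_C_sq_mul_ratApply, h1]; simp only [map_mul]; ring
  rw [ordAt_eq_of_X_sub_C_pow_mul (e := m + 1 + d)
    (by rw [hsplit, AddValuation.map_add_eq_of_lt_left _ (hlead ▸ hrest), hlead])]
  congr 1; push_cast; ring

theorem ordAt_X_sub_C_mul_eq_zero (hq : ordAt ζ q = ((-1 : ℤ) : WithTop ℤ)) :
    ordAt ζ (ι (X - C ζ) * q) = 0 := by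
  rw [(ordAt ζ).map_mul, ordAt_X_sub_C, hq, ← WithTop.coe_one, ← WithTop.coe_add]; rfl

theorem ordAt_ratApply_of_ordAt_eq_neg_one (hq : ordAt ζ q = ((-1 : ℤ) : WithTop ℤ))
    (hr : ((-1 : ℤ) : WithTop ℤ) ≤ ordAt ζ r) {w : ℂ[X]}
    (hw : w ≠ 0) (hm : 1 ≤ w.rootMultiplicity ζ)
    (hc : (w.rootMultiplicity ζ : ℂ) - 1 + RatFunc.eval (RingHom.id ℂ) ζ (ι (X - C ζ) * q)
      ≠ 0) :
    ordAt ζ (ratApply 1 q r w) = ↑((w.rootMultiplicity ζ : ℤ) - 2) := by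
  obtain ⟨B, hB, h1, h2⟩ := exists_derivative_expansion hw hm
  set m := w.rootMultiplicity ζ
  have hres := ordAt_X_sub_C_mul_eq_zero hq
  set E :=
    (RatFunc.C ((m : ℂ) - 1) + ι (X - C ζ) * q) * ι B + ι (X - C ζ) * ι (derivative B)
  have hE : ordAt ζ E = 0 := by
    have hfirst : ordAt ζ ((RatFunc.C ((m : ℂ) - 1) + ι (X - C ζ) * q) * ι B) = 0 := by
      rw [(ordAt ζ).map_mul, ordAt_C_add_eq_zero hres.ge hc, ordAt_algebraMap_eq_zero hB,
        add_zero]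
    rw [AddValuation.map_add_eq_of_lt_left, hfirst]
    rw [hfirst, (ordAt ζ).map_mul, ordAt_X_sub_C]
    exact zero_lt_one.trans_le (le_add_of_nonneg_right (ordAt_algebraMap_nonneg _))
  have hlead : ordAt ζ (ι ((X - C ζ) ^ m) * E) = (m : ℤ) := by
    rw [ordAt_X_sub_C_pow_mul, hE, add_zero]
  have hsplit : ι ((X - C ζ) ^ 2) * ratApply 1 q r w
      = ι ((X - C ζ) ^ m) * E + ι ((X - C ζ) ^ 2) * r * ι w := by
    rw [X_sub_C_sq_mul_ratApply, h1, h2]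
    simp only [E, map_mul, map_add, map_sub, RatFunc.algebraMap_C, map_natCast, map_one]
    ring
  have hrest : ((m : ℤ) : WithTop ℤ) < ordAt ζ (ι ((X - C ζ) ^ 2) * r * ι w) :=
    (WithTop.coe_lt_coe.mpr (by omega)).trans_le (le_ordAt_X_sub_C_sq_mul_mul hr w)
  rw [ordAt_eq_of_X_sub_C_pow_mul (e := m)
    (by rw [hsplit, AddValuation.map_add_eq_of_lt_left _ (hlead ▸ hrest), hlead])]
  norm_num

theorem ordAt_eq_neg_one_of_finite_compl (hV : IsRatApplyInvariant q r V)
    (hfin : (vanishingOrders V ζ)ᶜ.Finite) (hq : ordAt ζ q < 0) (hr : ordAt ζ q ≤ ordAt ζ r) :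
    ordAt ζ q = ((-1 : ℤ) : WithTop ℤ) := by
  obtain ⟨d, hd⟩ : ∃ d : ℤ, ordAt ζ q = d := WithTop.ne_top_iff_exists.mp hq.ne_top |>.imp
    fun _ h => h.symm
  rw [hd, ← WithTop.coe_zero, WithTop.coe_lt_coe] at hq
  rw [hd, WithTop.coe_inj]
  by_contra hd1
  have hshift : ∀ m ∈ vanishingOrders V ζ, m ≠ 0 →
      ∃ m' ∈ vanishingOrders V ζ, m' + (1 - d).toNat = m := by
    rintro _ ⟨w, hwV, hw, rfl⟩ hm
    obtain ⟨P, hPV, hP⟩ := hV w hwV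
    obtain ⟨hP0, hPm⟩ := rootMultiplicity_eq_of_ordAt_algebraMap_eq <| hP ▸
      ordAt_ratApply_of_ordAt_le_neg_two hd (by omega) (hd ▸ hr) hw
        (Nat.one_le_iff_ne_zero.mpr hm)
    exact ⟨_, ⟨P, hPV, hP0, rfl⟩, by omega⟩
  have hdvd := dvd_of_forall_mem_exists_add (by omega) hshift
  obtain ⟨N, hN⟩ := hfin.bddAbove
  have hmem : ∀ m, N < m → m ∈ vanishingOrders V ζ := fun m hm => by
    by_contra h; exact absurd (hN h) (by omega)
  have := Nat.le_of_dvd one_pos <| (Nat.dvd_add_right (hdvd _ (hmem (N + 1) (by omega)))).mp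
    (hdvd _ (hmem (N + 2) (by omega)))
  omega

theorem one_notMem_vanishingOrders (hV : IsRatApplyInvariant q r V)
    (hq : ordAt ζ q = ((-1 : ℤ) : WithTop ℤ)) (hr : ((-1 : ℤ) : WithTop ℤ) ≤ ordAt ζ r) :
    1 ∉ vanishingOrders V ζ := by
  rintro ⟨w, hwV, hw, hm⟩
  obtain ⟨P, -, hP⟩ := hV w hwV
  have hres := ordAt_X_sub_C_mul_eq_zero hq
  have h := ordAt_ratApply_of_ordAt_eq_neg_one hq hr hw hm.ge
    (by simpa [hm] using (ordAt_eq_zero_iff_eval_ne_zero hres.ge).mp hres)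
  rw [hP, hm] at h
  exact absurd (ordAt_algebraMap_nonneg P) (by rw [h]; decide)

theorem mem_vanishingOrders_of_add_two_mem (hV : IsRatApplyInvariant q r V)
    (hq : ordAt ζ q = ((-1 : ℤ) : WithTop ℤ)) (hr : ((-1 : ℤ) : WithTop ℤ) ≤ ordAt ζ r) {k : ℕ}
    (hk : k + 2 ∈ vanishingOrders V ζ)
    (hc : (k : ℂ) + 1 + RatFunc.eval (RingHom.id ℂ) ζ (ι (X - C ζ) * q) ≠ 0) :
    k ∈ vanishingOrders V ζ := by
  obtain ⟨w, hwV, hw, hm⟩ := hk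
  obtain ⟨P, hPV, hP⟩ := hV w hwV
  obtain ⟨hP0, hPm⟩ := rootMultiplicity_eq_of_ordAt_algebraMap_eq <| hP ▸
    ordAt_ratApply_of_ordAt_eq_neg_one hq hr hw (by omega)
      (by rw [hm]; convert hc using 2; push_cast; ring)
  exact ⟨P, hPV, hP0, by omega⟩

end PolynomialEigenfunctions

theorem stmt6 (q r : RatFunc ℂ)
    (hprim : Primitive 1 q r) (hsolv : SolvableByPolynomials 1 q r)
    (ζ : ℂ) (hpole : q.denom.eval ζ = 0 ∨ r.denom.eval ζ = 0) :
    ∃ ν : ℕ, 1 ≤ ν ∧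
      -- (i) the set of orders of vanishing at ζ of nonzero elements of the span of
      -- the polynomial eigenfunctions is ℕ minus the odd numbers below 2ν
      {m : ℕ | ∃ p ∈ Submodule.span ℂ {y : Polynomial ℂ | IsPolyEigenfunction 1 q r y},
          p ≠ 0 ∧ p.rootMultiplicity ζ = m}
        = {m : ℕ | ¬(m % 2 = 1 ∧ m < 2 * ν)} ∧
      -- (ii) (z - ζ)·q has no pole at ζ and takes the value -2ν there
      ((algebraMap (Polynomial ℂ) (RatFunc ℂ) (X - C ζ) * q).denom.eval ζ ≠ 0 ∧
        RatFunc.eval (RingHom.id ℂ) ζ (algebraMap (Polynomial ℂ) (RatFunc ℂ) (X - C ζ) * q)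
          = -(2 * (ν : ℂ))) ∧
      -- (iii) (z - ζ)·r has no pole at ζ
      (algebraMap (Polynomial ℂ) (RatFunc ℂ) (X - C ζ) * r).denom.eval ζ ≠ 0 := by
  set V := Submodule.span ℂ {y : ℂ[X] | IsPolyEigenfunction 1 q r y}
  have hV : IsRatApplyInvariant q r V := isRatApplyInvariant_span_eigenfunctions
  have hfin : (vanishingOrders V ζ)ᶜ.Finite := by
    obtain ⟨F, hF⟩ := hsolv
    exact finite_compl_vanishingOrders (fun n hn => (hF n hn).imp fun y hy =>
      ⟨Submodule.subset_span hy.2, hy.2.1, hy.1⟩) ζ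
  obtain ⟨u, hu, huζ⟩ : ∃ u, IsPolyEigenfunction 1 q r u ∧ u.eval ζ ≠ 0 := by
    simp only [Primitive, not_exists, not_forall, exists_prop] at hprim
    exact hprim ζ
  obtain ⟨P, -, hP⟩ := hV u (Submodule.subset_span hu)
  have hr := min_le_ordAt_of_ratApply_eq huζ hP
  have hqneg : ordAt ζ q < 0 := by
    by_contra! hq0
    rw [min_eq_left hq0] at hr
    exact hpole.elim (denom_eval_ne_zero_of_ordAt_nonneg hq0)
      (denom_eval_ne_zero_of_ordAt_nonneg hr)
  rw [min_eq_right hqneg.le] at hr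
  have hq := ordAt_eq_neg_one_of_finite_compl hV hfin hqneg hr
  rw [hq] at hr
  obtain ⟨ν, hν, ha, hM⟩ := exists_eq_odd_gaps (one_notMem_vanishingOrders hV hq hr) hfin
    fun _ => mem_vanishingOrders_of_add_two_mem hV hq hr
  refine ⟨ν, hν, hM, ⟨denom_eval_ne_zero_of_ordAt_nonneg (ordAt_X_sub_C_mul_eq_zero hq).ge, ha⟩,
    denom_eval_ne_zero_of_ordAt_nonneg ?_⟩
  rw [(ordAt ζ).map_mul, ordAt_X_sub_C]
  exact le_trans (by decide : (0 : WithTop ℤ) ≤ 1 + ((-1 : ℤ) : WithTop ℤ))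
    (add_le_add_right hr 1)
end

section
/- Let k_1 < … < k_ℓ be natural numbers, H_λ = Wr[H_{k_1}, …, H_{k_ℓ}] (viewed over ℂ), and U_λ = { Wr[H_{k_1}, …, H_{k_ℓ}, p] : p a polynomial with complex coefficients }. Then U_λ is primitive, i.e. for every ξ ∈ ℂ there exists u ∈ U_λ with u(ξ) ≠ 0, if and only if H_λ is squarefree (all complex roots of H_λ are simple). -/
open Polynomial MeasureTheory

lemma my_derivative_finprod {ι : Type*} [DecidableEq ι] (s : Finset ι) (f : ι → ℂ[X]) :
    derivative (∏ i ∈ s, f i) = ∑ i ∈ s, (∏ j ∈ s.erase i, f j) * derivative (f i) := by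
  classical
  induction s using Finset.induction_on with
  | empty => simp
  | @insert a s ha ih =>
    rw [Finset.prod_insert ha, derivative_mul, ih, Finset.sum_insert ha,
      Finset.erase_insert ha, Finset.mul_sum]
    have h2 : ∀ i ∈ s, (∏ j ∈ (insert a s).erase i, f j) * derivative (f i)
        = f a * ((∏ j ∈ s.erase i, f j) * derivative (f i)) := by
      intro i hi
      rw [Finset.erase_insert_of_ne (by rintro rfl; exact ha hi),
        Finset.prod_insert (by simp [ha, Finset.mem_erase])]
      ring
    rw [Finset.sum_congr rfl h2]
    ring

lemma my_derivative_det {n : ℕ} (M : Matrix (Fin n) (Fin n) ℂ[X]) :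
    derivative M.det = ∑ r, (M.updateRow r (fun j => derivative (M r j))).det := by
  classical
  rw [Matrix.det_apply, map_sum]
  have lhs : ∀ σ : Equiv.Perm (Fin n),
      derivative (Equiv.Perm.sign σ • ∏ i, M (σ i) i)
        = Equiv.Perm.sign σ • ∑ i, (∏ j ∈ Finset.univ.erase i, M (σ j) j) * derivative (M (σ i) i) := by
    intro σ
    rw [Units.smul_def, Units.smul_def, map_zsmul, my_derivative_finprod]
  rw [Finset.sum_congr rfl fun σ _ => lhs σ]
  -- RHS
  have rhs : ∀ r, (M.updateRow r (fun j => derivative (M r j))).det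
      = ∑ σ : Equiv.Perm (Fin n), Equiv.Perm.sign σ •
          ∏ i, (if σ i = r then derivative (M r i) else M (σ i) i) := by
    intro r
    rw [Matrix.det_apply]
    refine Finset.sum_congr rfl fun σ _ => ?_
    congr 1
    refine Finset.prod_congr rfl fun i _ => ?_
    by_cases h : σ i = r <;> simp [Matrix.updateRow_apply, h]
  rw [Finset.sum_congr rfl fun r _ => rhs r, Finset.sum_comm]
  refine Finset.sum_congr rfl fun σ _ => ?_
  rw [← Finset.smul_sum]
  congr 1
  rw [← Equiv.sum_comp σ (fun r => ∏ i, (if σ i = r then derivative (M r i) else M (σ i) i))]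
  refine Finset.sum_congr rfl fun i _ => ?_
  rw [← Finset.mul_prod_erase Finset.univ _ (Finset.mem_univ i)]
  rw [if_pos rfl]
  rw [mul_comm]
  congr 1
  refine Finset.prod_congr rfl fun j hj => ?_
  rw [if_neg (fun h => (Finset.mem_erase.mp hj).1 (σ.injective h))]

lemma my_derivative_polyWronskian (n : ℕ) (f : Fin (n+1) → ℂ[X]) :
    derivative (polyWronskian f) =
      (Matrix.of fun i j : Fin (n+1) =>
        (⇑(derivative (R := ℂ)))^[if i = Fin.last n then n+1 else (i:ℕ)] (f j)).det := by
  rw [polyWronskian, my_derivative_det]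
  rw [Finset.sum_eq_single (Fin.last n)]
  · congr 1
    funext i j
    by_cases h : i = Fin.last n
    · subst h
      rw [Matrix.updateRow_self]
      simp only [Matrix.of_apply, if_pos rfl, Fin.val_last]
      exact (Function.iterate_succ_apply' _ _ _).symm
    · rw [Matrix.updateRow_ne h]
      simp only [Matrix.of_apply, if_neg h]
  · intro r _ hr
    have hrn : (r : ℕ) < n := by
      rcases Fin.lt_or_eq_of_le (Fin.le_last r) with h | h
      · exact_mod_cast h
      · exact absurd h hr
    set r' : Fin (n+1) := ⟨r + 1, by omega⟩ with hr'
    apply Matrix.det_zero_of_row_eq (i_ne_j := show r ≠ r' by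
      intro h; apply_fun (Fin.val) at h; simp [hr'] at h)
    funext j
    rw [Matrix.updateRow_self, Matrix.updateRow_ne (show r' ≠ r by
      intro h; apply_fun (Fin.val) at h; simp [hr'] at h)]
    simp only [Matrix.of_apply, hr', Fin.val_mk]
    exact (Function.iterate_succ_apply' _ _ _).symm
  · simp

lemma pHermite_ode (n : ℕ) :
    derivative (derivative (pHermite ℂ n)) =
      2 * X * derivative (pHermite ℂ n) - 2 * (n : ℂ[X]) * pHermite ℂ n := by
  induction n with
  | zero => simp [pHermite]
  | succ n ih =>
    have hd : derivative (pHermite ℂ (n + 1)) = 2 * ((n : ℂ[X]) + 1) * pHermite ℂ n := by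
      show derivative (2 * X * pHermite ℂ n - derivative (pHermite ℂ n)) = _
      rw [derivative_sub, derivative_mul, derivative_mul, ih]
      simp
      ring
    have h2 : derivative (derivative (pHermite ℂ (n+1)))
        = 2 * ((n:ℂ[X])+1) * derivative (pHermite ℂ n) := by
      rw [hd, derivative_mul]
      simp
    rw [h2, hd, show pHermite ℂ (n+1) = 2 * X * pHermite ℂ n - derivative (pHermite ℂ n) from rfl]
    push_cast
    ring

lemma my_iter_add (i : ℕ) (a b : ℂ[X]) :
    (⇑(derivative (R := ℂ)))^[i] (a + b) = (⇑derivative)^[i] a + (⇑derivative)^[i] b := by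
  induction i generalizing a b with
  | zero => simp
  | succ i ih => rw [Function.iterate_succ_apply, map_add, ih, Function.iterate_succ_apply, Function.iterate_succ_apply]

lemma my_iter_sub (i : ℕ) (a b : ℂ[X]) :
    (⇑(derivative (R := ℂ)))^[i] (a - b) = (⇑derivative)^[i] a - (⇑derivative)^[i] b := by
  induction i generalizing a b with
  | zero => simp
  | succ i ih =>
    rw [Function.iterate_succ_apply, map_sub, ih, Function.iterate_succ_apply,
      Function.iterate_succ_apply]

lemma my_iter_sum (i : ℕ) {m : ℕ} (w : Fin m → ℂ) (g : Fin m → ℂ[X]) :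
    (⇑(derivative (R := ℂ)))^[i] (∑ j, w j • g j) = ∑ j, w j • (⇑derivative)^[i] (g j) := by
  induction i generalizing g with
  | zero => simp
  | succ i ih =>
    rw [Function.iterate_succ_apply, map_sum]
    simp_rw [derivative_smul]
    exact ih _

lemma my_iter_X_mul : ∀ (i : ℕ) (q : ℂ[X]),
    (⇑(derivative (R := ℂ)))^[i] (X * derivative q)
      = X * (⇑derivative)^[i] (derivative q) + (i : ℂ[X]) * (⇑derivative)^[i] q := by
  intro i
  induction i with
  | zero => intro q; simp
  | succ i ih =>
    intro q
    rw [Function.iterate_succ_apply]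
    have h1 : derivative (X * derivative q) = derivative q + X * derivative (derivative q) := by
      rw [derivative_mul, derivative_X, one_mul]
    rw [h1, my_iter_add, ih (derivative q)]
    rw [Function.iterate_succ_apply, Function.iterate_succ_apply]
    push_cast
    ring

noncomputable def cvec (ξ : ℂ) (q : ℂ[X]) (i : ℕ) : ℂ :=
  Polynomial.eval ξ ((⇑(derivative (R := ℂ)))^[i] q)

lemma cvec_step (ξ : ℂ) (q : ℂ[X]) (i : ℕ) :
    cvec ξ (derivative (derivative q) - C 2 * (X * derivative q)) i
      = cvec ξ q (i+2) - 2*ξ*cvec ξ q (i+1) - 2*(i:ℂ)*cvec ξ q i := by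
  unfold cvec
  rw [my_iter_sub, Polynomial.iterate_derivative_C_mul, my_iter_X_mul]
  have h2 : (⇑(derivative (R := ℂ)))^[i] (derivative (derivative q))
      = (⇑derivative)^[i+2] q := by
    rw [show i + 2 = i + 1 + 1 from rfl, Function.iterate_succ_apply,
      Function.iterate_succ_apply]
  have h1 : (⇑(derivative (R := ℂ)))^[i] (derivative q) = (⇑derivative)^[i+1] q := by
    rw [Function.iterate_succ_apply]
  rw [h2, h1]
  simp only [eval_sub, eval_mul, eval_add, eval_C, eval_X, eval_natCast]
  ring

lemma cvec_pow (ξ : ℂ) (m i : ℕ) :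
    cvec ξ ((X - C ξ)^m) i = if i = m then (m.factorial : ℂ) else 0 := by
  unfold cvec
  rw [Polynomial.iterate_derivative_X_sub_pow]
  rcases lt_trichotomy i m with h | h | h
  · rw [if_neg h.ne]
    have hne : m - i ≠ 0 := by omega
    simp [hne, zero_pow hne]
  · subst h
    simp [Nat.descFactorial_self]
  · rw [if_neg h.ne', Nat.descFactorial_eq_zero_iff_lt.mpr h]
    simp

lemma cvec_sum (ξ : ℂ) (i : ℕ) {m : ℕ} (w : Fin m → ℂ) (g : Fin m → ℂ[X]) :
    cvec ξ (∑ j, w j • g j) i = ∑ j, w j * cvec ξ (g j) i := by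
  unfold cvec
  rw [my_iter_sum, Polynomial.eval_finset_sum]
  refine Finset.sum_congr rfl fun j _ => ?_
  rw [Polynomial.eval_smul, smul_eq_mul]

lemma hermite_comb_ode (m : ℕ) (k : Fin m → ℕ) (w : Fin m → ℂ) :
    derivative (derivative (∑ j, w j • pHermite ℂ (k j)))
        - C 2 * (X * derivative (∑ j, w j • pHermite ℂ (k j)))
      = ∑ j, ((-(2 * (k j : ℂ))) * w j) • pHermite ℂ (k j) := by
  rw [map_sum]
  simp_rw [derivative_smul]
  rw [map_sum]
  simp_rw [derivative_smul]
  rw [Finset.mul_sum, Finset.mul_sum, ← Finset.sum_sub_distrib]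
  refine Finset.sum_congr rfl fun j _ => ?_
  simp only [smul_eq_C_mul]
  rw [pHermite_ode]
  simp only [map_mul, map_neg, map_ofNat, map_natCast C]
  ring

lemma my_eval_polyWronskian (ξ : ℂ) {m : ℕ} (g : Fin m → ℂ[X]) :
    Polynomial.eval ξ (polyWronskian g)
      = (Matrix.of fun i j : Fin m => cvec ξ (g j) (i:ℕ)).det := by
  rw [polyWronskian, ← Polynomial.coe_evalRingHom, RingHom.map_det]
  rfl

lemma my_eval_derivative_polyWronskian (ξ : ℂ) {n : ℕ} (g : Fin (n+1) → ℂ[X]) :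
    Polynomial.eval ξ (derivative (polyWronskian g))
      = (Matrix.of fun i j : Fin (n+1) =>
          cvec ξ (g j) (if i = Fin.last n then n+1 else (i:ℕ))).det := by
  rw [my_derivative_polyWronskian, ← Polynomial.coe_evalRingHom, RingHom.map_det]
  rfl

lemma cofactor_single {m : ℕ} (N : Matrix (Fin (m+1)) (Fin (m+1)) ℂ) (i0 : Fin (m+1))
    (hcol : ∀ i, i ≠ i0 → N i (Fin.last m) = 0) :
    N.det = (-1)^((i0:ℕ) + m) * N i0 (Fin.last m)
      * (N.submatrix i0.succAbove Fin.castSucc).det := by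
  rw [Matrix.det_succ_column N (Fin.last m), Finset.sum_eq_single i0]
  · rw [Fin.succAbove_last, Fin.val_last]
  · intro i _ hi
    rw [hcol i hi]
    ring
  · simp

lemma key_forward (n : ℕ) (k : Fin (n+1) → ℕ) (ξ : ℂ) (p : ℂ[X])
    (hp : Polynomial.eval ξ
      (polyWronskian (Fin.snoc (fun i => pHermite ℂ (k i)) p)) ≠ 0)
    (h0 : Polynomial.eval ξ (polyWronskian (fun i => pHermite ℂ (k i))) = 0)
    (h1 : Polynomial.eval ξ
      (derivative (polyWronskian (fun i => pHermite ℂ (k i)))) = 0) : False := by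
  classical
  set F : Fin (n+1) → ℂ[X] := fun i => pHermite ℂ (k i) with hF
  set P : (Fin (n+1) → ℂ) → ℂ[X] := fun w => ∑ j, w j • F j with hPdef
  have hPcvec : ∀ (w : Fin (n+1) → ℂ) (i : ℕ),
      cvec ξ (P w) i = ∑ j, w j * cvec ξ (F j) i := by
    intro w i
    rw [hPdef]
    exact cvec_sum ξ i w F
  -- descent step
  have hstep : ∀ (w : Fin (n+1) → ℂ) (i : ℕ),
      cvec ξ (P (fun j => (-(2 * (k j : ℂ))) * w j)) i
        = cvec ξ (P w) (i+2) - 2*ξ*cvec ξ (P w) (i+1) - 2*(i:ℂ)*cvec ξ (P w) i := by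
    intro w i
    rw [← cvec_step]
    congr 1
    rw [hPdef]
    exact (hermite_comb_ode (n+1) k w).symm
  -- the evaluated matrices
  rw [my_eval_polyWronskian] at h0 hp
  rw [my_eval_derivative_polyWronskian] at h1
  -- full-vanishing contradiction
  have hfull : ∀ w : Fin (n+1) → ℂ, w ≠ 0 →
      (∀ i : ℕ, i ≤ n+1 → cvec ξ (P w) i = 0) → False := by
    intro w hw hz
    apply hp
    rw [← Matrix.exists_mulVec_eq_zero_iff]
    refine ⟨Fin.snoc w 0, ?_, ?_⟩
    · intro hcon
      obtain ⟨j, hj⟩ := Function.ne_iff.mp hw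
      apply hj
      have := congr_fun hcon (Fin.castSucc j)
      rwa [Fin.snoc_castSucc] at this
    · funext i
      rw [Matrix.mulVec, dotProduct, Fin.sum_univ_castSucc]
      simp only [Fin.snoc_castSucc, Fin.snoc_last, Matrix.of_apply, mul_zero, add_zero,
        Pi.zero_apply]
      have hzi := hz i (by omega)
      rw [hPcvec w i] at hzi
      rw [← hzi]
      exact Finset.sum_congr rfl fun j _ => mul_comm _ _
  -- the descent predicate
  set Dp : ℕ → Prop := fun t => ∃ w : Fin (n+1) → ℂ,
    (∀ i : ℕ, i < t → cvec ξ (P w) i = 0) ∧ cvec ξ (P w) t ≠ 0 with hDp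
  have seed0 : Dp (n+1) := by
    obtain ⟨w, hw, hmul⟩ := (Matrix.exists_mulVec_eq_zero_iff).mpr h0
    refine ⟨w, ?_, ?_⟩
    · intro i hi
      have := congr_fun hmul ⟨i, hi⟩
      rw [Matrix.mulVec, dotProduct] at this
      simp only [Matrix.of_apply, Pi.zero_apply] at this
      rw [hPcvec w i, ← this]
      exact Finset.sum_congr rfl fun j _ => mul_comm _ _
    · intro hcon
      refine hfull w hw fun i hi => ?_
      rcases Nat.lt_or_ge i (n+1) with h | h
      · exact (by
          have := congr_fun hmul ⟨i, h⟩
          rw [Matrix.mulVec, dotProduct] at this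
          simp only [Matrix.of_apply, Pi.zero_apply] at this
          rw [hPcvec w i, ← this]
          exact Finset.sum_congr rfl fun j _ => mul_comm _ _)
      · have : i = n+1 := by omega
        rw [this]; exact hcon
  have seed1 : Dp n := by
    obtain ⟨w, hw, hmul⟩ := (Matrix.exists_mulVec_eq_zero_iff).mpr h1
    have hrow : ∀ i : Fin (n+1), cvec ξ (P w) (if i = Fin.last n then n+1 else (i:ℕ)) = 0 := by
      intro i
      have := congr_fun hmul i
      rw [Matrix.mulVec, dotProduct] at this
      simp only [Matrix.of_apply, Pi.zero_apply] at this
      rw [hPcvec w _, ← this]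
      exact Finset.sum_congr rfl fun j _ => mul_comm _ _
    have hlow : ∀ i : ℕ, i < n → cvec ξ (P w) i = 0 := by
      intro i hi
      have h := hrow ⟨i, by omega⟩
      rw [if_neg (by
        intro hcon
        apply_fun Fin.val at hcon
        simp only [Fin.val_last] at hcon
        omega)] at h
      exact h
    have hhigh : cvec ξ (P w) (n+1) = 0 := by
      have h := hrow (Fin.last n)
      rw [if_pos rfl] at h
      exact h
    refine ⟨w, hlow, fun hcon => ?_⟩
    refine hfull w hw fun i hi => ?_
    rcases Nat.lt_or_ge i n with h | h
    · exact hlow i h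
    · rcases Nat.eq_or_lt_of_le h with h' | h'
      · rw [← h']; exact hcon
      · have : i = n+1 := by omega
        rw [this]; exact hhigh
  have hdesc : ∀ t, Dp (t+2) → Dp t := by
    intro t ⟨w, hlt, hne⟩
    refine ⟨fun j => (-(2 * (k j : ℂ))) * w j, ?_, ?_⟩
    · intro i hi
      rw [hstep w i, hlt (i+2) (by omega), hlt (i+1) (by omega), hlt i (by omega)]
      ring
    · rw [hstep w t, hlt (t+1) (by omega), hlt t (by omega)]
      simpa using hne
  have hD : ∀ d t, t + d = n+1 → Dp t := by
    intro d
    induction d using Nat.strong_induction_on with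
    | _ d IH =>
      match d with
      | 0 => intro t ht; rw [show t = n+1 by omega]; exact seed0
      | 1 => intro t ht; rw [show t = n by omega]; exact seed1
      | (d+2) => intro t ht; exact hdesc t (IH d (by omega) (t+2) (by omega))
  -- the annihilating functional
  set Msq : Matrix (Fin (n+2)) (Fin (n+2)) ℂ :=
    Matrix.of fun i j => if h : (j:ℕ) < n+1 then cvec ξ (F ⟨j, h⟩) (i:ℕ) else 0 with hMsq
  have hMsqdet : Msq.det = 0 := by
    apply Matrix.det_eq_zero_of_column_eq_zero (Fin.last (n+1))
    intro i
    rw [hMsq]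
    simp
  obtain ⟨φ, hφ0, hφ⟩ := (Matrix.exists_vecMul_eq_zero_iff).mpr hMsqdet
  have hcolsum : ∀ j : Fin (n+1), ∑ i, φ i * cvec ξ (F j) (i:ℕ) = 0 := by
    intro j
    have := congr_fun hφ (Fin.castSucc j)
    rw [Matrix.vecMul, dotProduct] at this
    simp only [Pi.zero_apply] at this
    rw [← this]
    refine Finset.sum_congr rfl fun i _ => ?_
    rw [hMsq]
    simp only [Matrix.of_apply, Fin.coe_castSucc]
    rw [dif_pos j.isLt]
  have hPhiw : ∀ w : Fin (n+1) → ℂ, ∑ i : Fin (n+2), φ i * cvec ξ (P w) (i:ℕ) = 0 := by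
    intro w
    have : ∀ i : Fin (n+2), φ i * cvec ξ (P w) (i:ℕ)
        = ∑ j, w j * (φ i * cvec ξ (F j) (i:ℕ)) := by
      intro i
      rw [hPcvec, Finset.mul_sum]
      exact Finset.sum_congr rfl fun j _ => by ring
    rw [Finset.sum_congr rfl fun i _ => this i, Finset.sum_comm]
    refine Finset.sum_eq_zero fun j _ => ?_
    rw [← Finset.mul_sum, hcolsum j, mul_zero]
  -- main single-step fact
  have hmain : ∀ s : ℕ, (hs : s ≤ n+1) →
      (∀ i : ℕ, s < i → (hi : i ≤ n+1) → φ ⟨i, by omega⟩ = 0) →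
      φ ⟨s, by omega⟩ = 0 := by
    intro s hs habove
    obtain ⟨w, hlt, hne⟩ := hD (n+1-s) s (by omega)
    have hsum := hPhiw w
    rw [Finset.sum_eq_single (⟨s, by omega⟩ : Fin (n+2))] at hsum
    · exact (mul_eq_zero.mp hsum).resolve_right hne
    · intro i _ hi
      rcases Nat.lt_trichotomy (i:ℕ) s with h | h | h
      · rw [hlt _ h, mul_zero]
      · exact absurd (Fin.ext h) hi
      · rw [habove (i:ℕ) h (by omega), zero_mul]
    · intro h
      exact absurd (Finset.mem_univ _) h
  have hallzero : ∀ d : ℕ, ∀ s : ℕ, (hs : s ≤ n+1) → n+1 ≤ s + d → φ ⟨s, by omega⟩ = 0 := by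
    intro d
    induction d with
    | zero =>
      intro s hs hd
      exact hmain s hs (fun i hi hi' => absurd hi (by omega))
    | succ d IH =>
      intro s hs hd
      rcases Nat.lt_or_ge (s + d) (n+1) with h | h
      · exact hmain s hs (fun i hi hi' => IH i hi' (by omega))
      · exact IH s hs h
  apply hφ0
  funext i
  have := hallzero (n+1) (i:ℕ) (by omega) (by omega)
  simpa using this

lemma key_backward (n : ℕ) (k : Fin (n+1) → ℕ) (ξ : ℂ)
    (h : Polynomial.eval ξ (polyWronskian (fun i => pHermite ℂ (k i))) ≠ 0 ∨
      Polynomial.eval ξ (derivative (polyWronskian (fun i => pHermite ℂ (k i)))) ≠ 0) :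
    ∃ p : ℂ[X],
      (polyWronskian (Fin.snoc (fun i => pHermite ℂ (k i)) p)).eval ξ ≠ 0 := by
  classical
  set F : Fin (n+1) → ℂ[X] := fun i => pHermite ℂ (k i) with hF
  rcases h with h | h
  · refine ⟨(X - C ξ)^(n+1), ?_⟩
    rw [my_eval_polyWronskian]
    set N : Matrix (Fin (n+2)) (Fin (n+2)) ℂ :=
      Matrix.of fun i j => cvec ξ ((Fin.snoc F ((X - C ξ)^(n+1)) : Fin (n+2) → ℂ[X]) j) (i:ℕ) with hN
    rw [cofactor_single N (Fin.last (n+1)) ?hc]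
    case hc =>
      intro i hi
      rw [hN]
      simp only [Matrix.of_apply, Fin.snoc_last]
      rw [cvec_pow, if_neg (by
        intro hcon
        exact hi (Fin.ext (by simpa using hcon)))]
    have hsub : (N.submatrix (Fin.last (n+1)).succAbove Fin.castSucc)
        = Matrix.of fun i j : Fin (n+1) => cvec ξ (F j) (i:ℕ) := by
      funext a b
      rw [Fin.succAbove_last]
      simp only [Matrix.submatrix_apply, hN, Matrix.of_apply, Fin.snoc_castSucc,
        Fin.coe_castSucc]
    rw [hsub]
    apply mul_ne_zero
    apply mul_ne_zero
    · exact pow_ne_zero _ (by norm_num)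
    · rw [hN]
      simp only [Matrix.of_apply, Fin.snoc_last, Fin.val_last]
      rw [cvec_pow, if_pos rfl]
      exact Nat.cast_ne_zero.mpr (Nat.factorial_ne_zero _)
    · rw [my_eval_polyWronskian] at h
      exact h
  · refine ⟨(X - C ξ)^n, ?_⟩
    rw [my_eval_polyWronskian]
    set N : Matrix (Fin (n+2)) (Fin (n+2)) ℂ :=
      Matrix.of fun i j => cvec ξ ((Fin.snoc F ((X - C ξ)^n) : Fin (n+2) → ℂ[X]) j) (i:ℕ) with hN
    set i0 : Fin (n+2) := ⟨n, by omega⟩ with hi0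
    rw [cofactor_single N i0 ?hc]
    case hc =>
      intro i hi
      rw [hN]
      simp only [Matrix.of_apply, Fin.snoc_last]
      rw [cvec_pow, if_neg (by
        intro hcon
        exact hi (Fin.ext (by simpa [hi0] using hcon)))]
    have hsA : ∀ a : Fin (n+1),
        ((i0.succAbove a : Fin (n+2)) : ℕ) = if a = Fin.last n then n+1 else (a:ℕ) := by
      intro a
      by_cases ha : a = Fin.last n
      · subst ha
        rw [if_pos rfl, Fin.succAbove_of_le_castSucc]
        · simp
        · rw [Fin.le_castSucc_iff]
          simp only [hi0]
          rw [Fin.lt_def]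
          simp
      · rw [if_neg ha, Fin.succAbove_of_castSucc_lt]
        · simp
        · rw [Fin.lt_def]
          simp only [Fin.coe_castSucc, hi0]
          have := Fin.val_lt_last ha
          omega
    have hsub : (N.submatrix i0.succAbove Fin.castSucc)
        = Matrix.of fun i j : Fin (n+1) =>
            cvec ξ (F j) (if i = Fin.last n then n+1 else (i:ℕ)) := by
      funext a b
      simp only [Matrix.submatrix_apply, hN, Matrix.of_apply, Fin.snoc_castSucc]
      rw [hsA a]
    rw [hsub]
    apply mul_ne_zero
    apply mul_ne_zero
    · exact pow_ne_zero _ (by norm_num)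
    · rw [hN]
      simp only [Matrix.of_apply, Fin.snoc_last, hi0]
      rw [cvec_pow, if_pos rfl]
      exact Nat.cast_ne_zero.mpr (Nat.factorial_ne_zero _)
    · rw [my_eval_derivative_polyWronskian] at h
      exact h

theorem stmt13 (ℓ : ℕ) (k : Fin ℓ → ℕ) (hk : StrictMono k)
    (Hlam : Polynomial ℂ) (hH : Hlam = polyWronskian (fun i => pHermite ℂ (k i))) :
    (∀ ξ : ℂ, ∃ p : Polynomial ℂ,
        (polyWronskian (Fin.snoc (fun i => pHermite ℂ (k i)) p)).eval ξ ≠ 0) ↔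
      Squarefree Hlam := by
  subst hH
  cases ℓ with
  | zero =>
    constructor
    · intro _
      have h1 : polyWronskian (fun i : Fin 0 => pHermite ℂ (k i)) = 1 := Matrix.det_isEmpty
      rw [h1]
      exact squarefree_one
    · intro _ ξ
      refine ⟨1, ?_⟩
      have h1 : polyWronskian (Fin.snoc (fun i : Fin 0 => pHermite ℂ (k i)) 1) = 1 := by
        rw [polyWronskian, Matrix.det_fin_one]
        simp [Fin.snoc]
      rw [h1]
      simp
  | succ n =>
    constructor
    · intro hprim x hx
      by_contra hux
      have hW2 : ∃ ξ : ℂ,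
          ((X - C ξ) * (X - C ξ)) ∣ polyWronskian (fun i => pHermite ℂ (k i)) := by
        rcases eq_or_ne x 0 with rfl | hx0
        · refine ⟨0, ?_⟩
          have hW0 : polyWronskian (fun i => pHermite ℂ (k i)) = 0 :=
            zero_dvd_iff.mp (by simpa using hx)
          rw [hW0]
          exact dvd_zero _
        · have hdeg : 0 < x.degree := Polynomial.degree_pos_of_ne_zero_of_nonunit hx0 hux
          obtain ⟨ξ, hξ⟩ := Complex.exists_root hdeg
          have hd1 : (X - C ξ) ∣ x := dvd_iff_isRoot.mpr hξ
          exact ⟨ξ, dvd_trans (mul_dvd_mul hd1 hd1) hx⟩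
      obtain ⟨ξ, Q, hWQ⟩ := hW2
      have h0 : Polynomial.eval ξ (polyWronskian (fun i => pHermite ℂ (k i))) = 0 := by
        rw [hWQ]
        simp
      have h1 : Polynomial.eval ξ
          (derivative (polyWronskian (fun i => pHermite ℂ (k i)))) = 0 := by
        rw [hWQ]
        simp [derivative_mul]
      obtain ⟨p, hp⟩ := hprim ξ
      exact absurd (key_forward n k ξ p hp h0 h1) not_false
    · intro hsq ξ
      apply key_backward n k ξ
      by_contra hcon
      push_neg at hcon
      obtain ⟨h0, h1⟩ := hcon
      set W := polyWronskian (fun i => pHermite ℂ (k i)) with hW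
      obtain ⟨Q, hQ⟩ := dvd_iff_isRoot.mpr h0
      have hQ0 : Polynomial.eval ξ Q = 0 := by
        have h1' := h1
        rw [hQ, derivative_mul] at h1'
        simpa using h1'
      obtain ⟨R, hR⟩ := dvd_iff_isRoot.mpr hQ0
      have hdvd : (X - C ξ) * (X - C ξ) ∣ W := ⟨R, by rw [hQ, hR]; ring⟩
      exact Polynomial.not_isUnit_X_sub_C ξ (hsq _ hdvd)
end
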